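/- arXiv:1805.02911 — 6 statements merged into one kernel-verified Lean document; each statement's English description precedes it below -/
import Mathlib

section
/- Let n be a positive integer and a_1, ..., a_n pairwise distinct positive integers. If there exist nonnegative integers x_1, ..., x_n and an integer t ≥ 2 such that a_1·x_1 + ... + a_n·x_n = t·a_1·a_2·...·a_n, then there exist integers x_i' with 0 ≤ x_i' ≤ x_i for all i such that a_1·x_1' + ... + a_n·x_n' = a_1·a_2·...·a_n. -/
/-!
Read `y i` as a number of coins of value `d i`: any multiple `N` of `∏ d i` can be paid exactly
from a purse of distinct denominations worth at least `2 N`. Induct on `N`. If one denomination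
alone is worth `N`, pay with it. If, for some `d i ≥ 2`, the other denominations are worth at
least `N + N / d i`, then, since their product divides `N / d i`, the induction hypothesis pays
`N / d i` from them `d i` times. Otherwise every denomination `d i ≥ 2` is worth more than
`N - N / d i`, and counting leaves two configurations: at most two such denominations next to a
unit coin with at least as many pieces as the sum of their values, where a greedy payment works,
or three of values `2`, `3` and `e ≥ 4`, where all coins of value `e` leave less than `N / 4` to
pay, which is done in `3`s and `2`s.
-/

open Finset

variable {ι : Type*}

def IsSubsum (s : Finset ι) (d y : ι → ℕ) (N : ℕ) : Prop :=
  ∃ z ≤ y, ∑ i ∈ s, d i * z i = N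

lemma mul_add_le_of_dvd_of_mul_lt {a b N : ℕ} (ha : a ∣ N) (h : a * b < N) : a * b + a ≤ N := by
  obtain ⟨q, rfl⟩ := ha
  calc a * b + a = a * (b + 1) := by ring
    _ ≤ a * q := Nat.mul_le_mul_left a (Nat.lt_of_mul_lt_mul_left h)

lemma exists_three_mul_add_two_mul_eq {ρ : ℕ} (h : 2 ≤ ρ) :
    ∃ a b, a ≤ 2 ∧ 3 * b + 2 * a = ρ := by
  rcases (by omega : ρ % 3 = 0 ∨ ρ % 3 = 1 ∨ ρ % 3 = 2) with h3 | h3 | h3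
  · exact ⟨0, ρ / 3, by omega, by omega⟩
  · exact ⟨2, ρ / 3 - 1, by omega, by omega⟩
  · exact ⟨1, ρ / 3, by omega, by omega⟩

lemma pi_single_le_iff [DecidableEq ι] {j : ι} {k : ℕ} {y : ι → ℕ} :
    Pi.single j k ≤ y ↔ k ≤ y j := by
  refine ⟨fun h => by simpa using h j, fun h i => ?_⟩
  rcases eq_or_ne i j with rfl | hij
  · simpa using h
  · simp [hij]

lemma sum_mul_add_apply (s : Finset ι) (d y y' : ι → ℕ) :
    ∑ i ∈ s, d i * (y + y') i = ∑ i ∈ s, d i * y i + ∑ i ∈ s, d i * y' i := by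
  simp only [Pi.add_apply, mul_add, sum_add_distrib]

lemma sum_mul_single_apply [DecidableEq ι] {s : Finset ι} {j : ι} (hj : j ∈ s) (d : ι → ℕ)
    (k : ℕ) :
    ∑ i ∈ s, d i * (Pi.single j k : ι → ℕ) i = d j * k := by
  rw [sum_eq_single_of_mem j hj fun i _ hij => by simp [hij]]
  simp

namespace IsSubsum

variable {s : Finset ι} {d y : ι → ℕ} {N : ℕ}

lemma zero (s : Finset ι) (d y : ι → ℕ) : IsSubsum s d y 0 := ⟨0, fun _ => Nat.zero_le _, by simp⟩

lemma mono {y' : ι → ℕ} (h : IsSubsum s d y N) (hy : y ≤ y') : IsSubsum s d y' N :=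
  let ⟨z, hz, hzN⟩ := h
  ⟨z, hz.trans hy, hzN⟩

lemma add {y' : ι → ℕ} {N' : ℕ} (h : IsSubsum s d y N) (h' : IsSubsum s d y' N') :
    IsSubsum s d (y + y') (N + N') :=
  let ⟨z, hz, hzN⟩ := h
  let ⟨z', hz', hzN'⟩ := h'
  ⟨z + z', add_le_add hz hz', by rw [sum_mul_add_apply, hzN, hzN']⟩

lemma single [DecidableEq ι] {j : ι} (hj : j ∈ s) (k : ℕ) :
    IsSubsum s d (Pi.single j k) (d j * k) :=
  ⟨Pi.single j k, le_rfl, sum_mul_single_apply hj d k⟩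

lemma of_subset [DecidableEq ι] {t : Finset ι} (h : IsSubsum t d y N) (hts : t ⊆ s) :
    IsSubsum s d y N := by
  obtain ⟨z, hz, hzN⟩ := h
  refine ⟨fun i => if i ∈ t then z i else 0, fun i => ?_, ?_⟩
  · dsimp only
    split_ifs
    exacts [hz i, Nat.zero_le _]
  · simp only [mul_ite, mul_zero]
    rw [← sum_filter, filter_mem_eq_inter, inter_eq_right.mpr hts, hzN]

end IsSubsum

section

variable {s : Finset ι} {d y : ι → ℕ} {N : ℕ}

lemma isSubsum_mul_of_forall_two_mul_le {q : ℕ}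
    (hq : ∀ y : ι → ℕ, 2 * q ≤ ∑ i ∈ s, d i * y i → IsSubsum s d y q) (k : ℕ) :
    ∀ y : ι → ℕ, (k + 1) * q ≤ ∑ i ∈ s, d i * y i → IsSubsum s d y (k * q) := by
  induction k with
  | zero => exact fun y _ => by simpa using IsSubsum.zero s d y
  | succ k ih =>
    intro y hy
    obtain ⟨z, hzy, hz⟩ := hq y (le_trans (Nat.mul_le_mul_right q (by omega)) hy)
    have hsplit : ∑ i ∈ s, d i * y i = q + ∑ i ∈ s, d i * (y - z) i := by
      rw [← hz, ← sum_mul_add_apply, add_tsub_cancel_of_le hzy]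
    have hrest := ih (y - z) (by rw [add_mul] at hy; omega)
    simpa [add_tsub_cancel_of_le hzy, add_mul, add_comm] using
      IsSubsum.add ⟨z, le_rfl, hz⟩ hrest

lemma exists_eq_two_and_exists_eq_three {i j k : ι} (hi : i ∈ s) (hj : j ∈ s) (hk : k ∈ s)
    (hij : d i ≠ d j) (hik : d i ≠ d k) (hjk : d j ≠ d k)
    (h2i : 2 ≤ d i) (h2j : 2 ≤ d j) (h2k : 2 ≤ d k)
    (hsum : N + 3 ≤ N / d i + N / d j + N / d k) :
    (∃ i₂ ∈ s, d i₂ = 2) ∧ ∃ i₃ ∈ s, d i₃ = 3 := by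
  have := Nat.mul_div_le N 2
  have := Nat.mul_div_le N 3
  have := Nat.mul_div_le N 4
  constructor
  · by_contra! h
    have hle (m : ι) (hm : m ∈ s) (h2 : 2 ≤ d m) : N / d m ≤ N / 3 :=
      Nat.div_le_div_left (by have := h m hm; omega) (by norm_num)
    have := hle i hi h2i
    have := hle j hj h2j
    have := hle k hk h2k
    omega
  · by_contra! h
    have hle (m : ι) (hm : m ∈ s) (h2 : 2 ≤ d m) :
        d m = 2 ∧ N / d m = N / 2 ∨ N / d m ≤ N / 4 := by
      rcases (by have := h m hm; omega : d m = 2 ∨ 4 ≤ d m) with h2 | h4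
      · exact .inl ⟨h2, by rw [h2]⟩
      · exact .inr (Nat.div_le_div_left h4 (by norm_num))
    have := hle i hi h2i
    have := hle j hj h2j
    have := hle k hk h2k
    omega

section

variable [DecidableEq ι]

lemma isSubsum_of_le_mul {i : ι} (hi : i ∈ s) (hdvd : d i ∣ N) (h : N ≤ d i * y i) :
    IsSubsum s d y N := by
  simpa [Nat.mul_div_cancel' hdvd] using
    (IsSubsum.single hi (N / d i) (d := d)).mono (pi_single_le_iff.mpr (Nat.div_le_of_le_mul h))

lemma isSubsum_of_le_sum_erase {i : ι} (hdvd : d i ∣ N)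
    (hq : ∀ y : ι → ℕ, 2 * (N / d i) ≤ ∑ j ∈ s.erase i, d j * y j →
      IsSubsum (s.erase i) d y (N / d i))
    (hrest : N + N / d i ≤ ∑ j ∈ s.erase i, d j * y j) : IsSubsum s d y N := by
  have hNq : d i * (N / d i) = N := Nat.mul_div_cancel' hdvd
  have := isSubsum_mul_of_forall_two_mul_le hq (d i) y (by rwa [add_one_mul, hNq])
  rw [hNq] at this
  exact this.of_subset (erase_subset i s)

lemma isSubsum_of_le_sum_of_unit {i₀ : ι} (hd : ∀ i ∈ s, 0 < d i) (hi₀ : i₀ ∈ s)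
    (hd₀ : d i₀ = 1) (hmax : ∀ i ∈ s, d i ≤ y i₀ + 1) (hN : N ≤ ∑ i ∈ s, d i * y i) :
    IsSubsum s d y N := by
  induction N using Nat.strong_induction_on generalizing y with
  | _ N ih =>
  by_cases hN₀ : N ≤ y i₀
  · simpa [hd₀] using (IsSubsum.single hi₀ N (d := d)).mono (pi_single_le_iff.mpr hN₀)
  obtain ⟨j, hj, hji₀, hyj⟩ : ∃ j ∈ s, j ≠ i₀ ∧ 0 < y j := by
    by_contra! h
    rw [sum_eq_single_of_mem i₀ hi₀ fun j hj hji₀ => by simp [Nat.le_zero.mp (h j hj hji₀)],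
      hd₀] at hN
    omega
  have hjy : Pi.single j 1 ≤ y := pi_single_le_iff.mpr hyj
  set y' : ι → ℕ := y - Pi.single j 1
  have hsplit : ∑ i ∈ s, d i * y i = ∑ i ∈ s, d i * y' i + d j := by
    rw [← mul_one (d j), ← sum_mul_single_apply hj, ← sum_mul_add_apply, tsub_add_cancel_of_le hjy]
  have hy'₀ : y' i₀ = y i₀ := by simp [y', hji₀.symm]
  have hdjN : d j ≤ N := by have := hmax j hj; omega
  have := ih (N - d j) (by have := hd j hj; omega) (y := y') (by rwa [hy'₀]) (by omega)
  simpa [y', tsub_add_cancel_of_le hjy, Nat.sub_add_cancel hdjN] using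
    this.add (IsSubsum.single hj 1)

lemma isSubsum_of_two_three {i₂ i₃ i₄ : ι} (hi₂ : i₂ ∈ s) (hi₃ : i₃ ∈ s) (hi₄ : i₄ ∈ s)
    (hd₂ : d i₂ = 2) (hd₃ : d i₃ = 3) (hd₄ : 4 ≤ d i₄) (hcap : d i₄ * y i₄ + d i₄ ≤ N)
    (hbig : ∀ i ∈ s, 2 ≤ d i → N < N / d i + d i * y i) : IsSubsum s d y N := by
  have h₂ := hbig i₂ hi₂ (by omega)
  have h₃ := hbig i₃ hi₃ (by omega)
  have h₄ := hbig i₄ hi₄ (by omega)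
  rw [hd₂] at h₂
  rw [hd₃] at h₃
  have : N / d i₄ ≤ N / 4 := Nat.div_le_div_left hd₄ (by norm_num)
  have := Nat.mul_div_le N 2
  have := Nat.mul_div_le N 3
  have := Nat.mul_div_le N 4
  obtain ⟨a, b, ha, hab⟩ := exists_three_mul_add_two_mul_eq (ρ := N - d i₄ * y i₄) (by omega)
  have hpay := ((IsSubsum.single hi₄ (y i₄) (d := d)).add (IsSubsum.single hi₃ b)).add
    (IsSubsum.single hi₂ a)
  rw [hd₂, hd₃, show d i₄ * y i₄ + 3 * b + 2 * a = N by omega] at hpay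
  refine hpay.mono fun m => ?_
  simp only [Pi.add_apply, Pi.single_apply]
  split_ifs <;> subst_vars <;> omega

lemma lt_div_add_mul_of_sum_erase_lt {i : ι} (hi : i ∈ s) (hy : 2 * N ≤ ∑ j ∈ s, d j * y j)
    (hrest : ∑ j ∈ s.erase i, d j * y j < N + N / d i) : N < N / d i + d i * y i := by
  have := sum_erase_add s (fun j => d j * y j) hi
  omega

lemma add_three_le_div_add_div_add_div {i j k : ι} (hi : i ∈ s) (hj : j ∈ s) (hk : k ∈ s)
    (hji : j ≠ i) (hki : k ≠ i) (hjk : j ≠ k)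
    (hrest : ∀ l ∈ s, 2 ≤ d l → ∑ m ∈ s.erase l, d m * y m < N + N / d l)
    (hy : 2 * N ≤ ∑ l ∈ s, d l * y l) (h2i : 2 ≤ d i) (h2j : 2 ≤ d j) (h2k : 2 ≤ d k) :
    N + 3 ≤ N / d i + N / d j + N / d k := by
  have : d j * y j + d k * y k ≤ ∑ l ∈ s.erase i, d l * y l := by
    rw [← sum_pair hjk (f := fun l => d l * y l)]
    refine sum_le_sum_of_subset fun l hl => ?_
    rcases mem_insert.mp hl with rfl | hl
    · exact mem_erase.mpr ⟨hji, hj⟩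
    · exact mem_erase.mpr ⟨(mem_singleton.mp hl) ▸ hki, (mem_singleton.mp hl) ▸ hk⟩
  have := hrest i hi h2i
  have := lt_div_add_mul_of_sum_erase_lt hj hy (hrest j hj h2j)
  have := lt_div_add_mul_of_sum_erase_lt hk hy (hrest k hk h2k)
  omega

lemma isSubsum_of_two_lt_card (hinj : Set.InjOn d s) (hy : 2 * N ≤ ∑ i ∈ s, d i * y i)
    (hcap : ∀ i ∈ s, d i * y i + d i ≤ N)
    (hrest : ∀ i ∈ s, 2 ≤ d i → ∑ j ∈ s.erase i, d j * y j < N + N / d i)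
    (hcard : 2 < #(s.filter (2 ≤ d ·))) : IsSubsum s d y N := by
  obtain ⟨i, hi', j, hj', k, hk', hij, hik, hjk⟩ := two_lt_card.mp hcard
  obtain ⟨hi, h2i⟩ := mem_filter.mp hi'
  obtain ⟨hj, h2j⟩ := mem_filter.mp hj'
  obtain ⟨hk, h2k⟩ := mem_filter.mp hk'
  have hdij := hinj.ne hi hj hij
  have hdik := hinj.ne hi hk hik
  have hdjk := hinj.ne hj hk hjk
  obtain ⟨⟨i₂, hi₂, hd₂⟩, ⟨i₃, hi₃, hd₃⟩⟩ := exists_eq_two_and_exists_eq_three hi hj hk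
    hdij hdik hdjk h2i h2j h2k
    (add_three_le_div_add_div_add_div hi hj hk hij.symm hik.symm hjk hrest hy h2i h2j h2k)
  obtain ⟨i₄, hi₄, hd₄⟩ : ∃ i₄ ∈ s, 4 ≤ d i₄ := by
    rcases (by omega : 4 ≤ d i ∨ 4 ≤ d j ∨ 4 ≤ d k) with h | h | h
    exacts [⟨i, hi, h⟩, ⟨j, hj, h⟩, ⟨k, hk, h⟩]
  exact isSubsum_of_two_three hi₂ hi₃ hi₄ hd₂ hd₃ hd₄ (hcap i₄ hi₄)
    fun l hl h2l => lt_div_add_mul_of_sum_erase_lt hl hy (hrest l hl h2l)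

lemma isSubsum_of_card_le_two (hd : ∀ i ∈ s, 0 < d i) (hinj : Set.InjOn d s) (hN : 0 < N)
    (hy : 2 * N ≤ ∑ i ∈ s, d i * y i) (hcap : ∀ i ∈ s, d i * y i + d i ≤ N)
    (hcard : #(s.filter (2 ≤ d ·)) ≤ 2) : IsSubsum s d y N := by
  have hsmall : ∀ t ⊆ s.filter (2 ≤ d ·), ∑ i ∈ t, d i * y i + ∑ i ∈ t, d i ≤ 2 * N := by
    intro t ht
    rw [← sum_add_distrib]
    calc ∑ i ∈ t, (d i * y i + d i) ≤ #t • N :=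
          sum_le_card_nsmul t _ N fun i hi => hcap i (mem_filter.mp (ht hi)).1
      _ ≤ 2 * N := Nat.mul_le_mul_right N ((card_le_card ht).trans hcard)
  obtain ⟨i₀, hi₀, hd₀⟩ : ∃ i₀ ∈ s, d i₀ = 1 := by
    by_contra! h
    have := hsmall s fun i hi => mem_filter.mpr ⟨hi, by have := hd i hi; have := h i hi; omega⟩
    obtain ⟨i, hi⟩ := nonempty_of_sum_ne_zero (s := s) (f := fun i => d i * y i) (by omega)
    have := single_le_sum (fun j _ => Nat.zero_le (d j)) hi
    have := hd i hi
    omega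
  have hothers : s.erase i₀ ⊆ s.filter (2 ≤ d ·) := fun i hi => by
    obtain ⟨hne, hi⟩ := mem_erase.mp hi
    have := hinj.ne hi hi₀ hne
    have := hd i hi
    exact mem_filter.mpr ⟨hi, by omega⟩
  have := hsmall _ hothers
  have hsplit := sum_erase_add s (fun i => d i * y i) hi₀
  rw [hd₀, one_mul] at hsplit
  refine isSubsum_of_le_sum_of_unit hd hi₀ hd₀ (fun i hi => ?_) (by omega)
  rcases eq_or_ne i i₀ with rfl | hne
  · omega
  · have := single_le_sum (fun j _ => Nat.zero_le (d j)) (mem_erase.mpr ⟨hne, hi⟩)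
    omega

theorem isSubsum_of_two_mul_le (hd : ∀ i ∈ s, 0 < d i) (hinj : Set.InjOn d s)
    (hdvd : ∏ i ∈ s, d i ∣ N) (hy : 2 * N ≤ ∑ i ∈ s, d i * y i) : IsSubsum s d y N := by
  induction N using Nat.strong_induction_on generalizing s y with
  | _ N ih =>
  rcases N.eq_zero_or_pos with rfl | hN
  · exact IsSubsum.zero s d y
  have hdvd' : ∀ i ∈ s, d i ∣ N := fun i hi => (dvd_prod_of_mem d hi).trans hdvd
  by_cases hone : ∃ i ∈ s, N ≤ d i * y i
  · obtain ⟨i, hi, hiN⟩ := hone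
    exact isSubsum_of_le_mul hi (hdvd' i hi) hiN
  by_cases hblocks : ∃ i ∈ s, 2 ≤ d i ∧ N + N / d i ≤ ∑ j ∈ s.erase i, d j * y j
  · obtain ⟨i, hi, h2i, hrest⟩ := hblocks
    refine isSubsum_of_le_sum_erase (hdvd' i hi) (fun y' hy' => ?_) hrest
    refine ih _ (Nat.div_lt_self hN h2i) (fun j hj => hd j (mem_of_mem_erase hj))
      (hinj.mono (coe_subset.mpr (erase_subset i s))) ?_ hy'
    exact Nat.dvd_div_of_mul_dvd (by rwa [mul_prod_erase s d hi])
  push Not at hone hblocks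
  have hcap i hi := mul_add_le_of_dvd_of_mul_lt (hdvd' i hi) (hone i hi)
  rcases le_or_gt #(s.filter (2 ≤ d ·)) 2 with hcard | hcard
  · exact isSubsum_of_card_le_two hd hinj hN hy hcap hcard
  · exact isSubsum_of_two_lt_card hinj hy hcap hblocks hcard

end

end

theorem stmt0_general (n : ℕ) (a x : Fin n → ℕ) (ha : ∀ i, 0 < a i)
    (hinj : Function.Injective a) (t : ℕ) (ht : 2 ≤ t)
    (h : ∑ i, a i * x i = t * ∏ i, a i) :
    ∃ x' : Fin n → ℕ, (∀ i, x' i ≤ x i) ∧ ∑ i, a i * x' i = ∏ i, a i :=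
  isSubsum_of_two_mul_le (fun i _ => ha i) hinj.injOn dvd_rfl
    (h ▸ Nat.mul_le_mul_right _ ht)

theorem stmt0 (n : ℕ) (hn : 0 < n) (a x : Fin n → ℕ) (ha : ∀ i, 0 < a i)
    (hinj : Function.Injective a) (t : ℕ) (ht : 2 ≤ t)
    (h : ∑ i, a i * x i = t * ∏ i, a i) :
    ∃ x' : Fin n → ℕ, (∀ i, x' i ≤ x i) ∧ ∑ i, a i * x' i = ∏ i, a i :=
  stmt0_general n a x ha hinj t ht h
end

section
/- Let G be an abelian group and g ∈ G an element of order n ≥ 4. In the monoid B(G) of zero-sum sequences over G, the element B = g^n · ((n−2)g) · (2g) (the sequence consisting of n copies of g together with the elements (n−2)g and 2g) has catenary degree c(B) = 2. -/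
/-- A minimal zero-sum sequence over the abelian group `G`: a nonempty zero-sum
multiset none of whose proper nonempty sub-multisets has sum zero. -/
def IsMinZeroSum {G : Type*} [AddCommGroup G] (S : Multiset G) : Prop :=
  S ≠ 0 ∧ S.sum = 0 ∧ ∀ T ≤ S, T ≠ 0 → T.sum = 0 → T = S

/-- A factorization of a zero-sum sequence `B` into atoms of `B(G)`. -/
def IsFactorization {G : Type*} [AddCommGroup G] (B : Multiset G)
    (z : Multiset (Multiset G)) : Prop :=
  (∀ A ∈ z, IsMinZeroSum A) ∧ z.sum = B

/-- The usual distance between two factorizations. -/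
noncomputable def factDist {G : Type*} [AddCommGroup G] (z z' : Multiset (Multiset G)) : ℕ :=
  letI := Classical.decEq (Multiset G)
  max (z - z').card (z' - z).card

/-- The catenary degree of `B ∈ B(G)`: the least `N` such that any two factorizations
of `B` can be concatenated by a chain of factorizations with consecutive distances `≤ N`. -/
noncomputable def catenaryDeg {G : Type*} [AddCommGroup G] (B : Multiset G) : ℕ :=
  sInf {N : ℕ | ∀ z z', IsFactorization B z → IsFactorization B z' →
    Relation.ReflTransGen (fun x y => IsFactorization B y ∧ factDist x y ≤ N) z z'}

/-- The tame degree `t(A, U)` of `A ∈ B(G)` with respect to the atom `U`. -/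
noncomputable def tameDeg {G : Type*} [AddCommGroup G] (A U : Multiset G) : ℕ :=
  sInf {N : ℕ | ∀ z, IsFactorization A z →
    (∃ z', IsFactorization A z' ∧ U ∈ z') →
    ∃ z', IsFactorization A z' ∧ U ∈ z' ∧ factDist z z' ≤ N}

/-- The set of (positive) tame degrees of `B(G)`. -/
noncomputable def TaSet (G : Type*) [AddCommGroup G] : Set ℕ :=
  {n | 0 < n ∧ ∃ A U : Multiset G, A.sum = 0 ∧ IsMinZeroSum U ∧ tameDeg A U = n}

/-- The Davenport constant of `G`: the supremum of lengths of minimal zero-sum sequences. -/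
noncomputable def davenport (G : Type*) [AddCommGroup G] : ℕ :=
  sSup {n : ℕ | ∃ A : Multiset G, IsMinZeroSum A ∧ A.card = n}


section
variable {G : Type*} [AddCommGroup G]

private lemma le_pair' {α : Type*} {T : Multiset α} {x y : α} (h : T ≤ {x, y}) :
    T = 0 ∨ T = {x} ∨ T = {y} ∨ T = {x, y} := by
  have hc : Multiset.card T ≤ 2 := by simpa using Multiset.card_le_card h
  have h0 : Multiset.card T = 0 ∨ Multiset.card T = 1 ∨ Multiset.card T = 2 := by omega
  rcases h0 with h0 | h0 | h0
  · exact Or.inl (Multiset.card_eq_zero.mp h0)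
  · obtain ⟨z, rfl⟩ := Multiset.card_eq_one.mp h0
    have hz : z ∈ ({x, y} : Multiset α) :=
      Multiset.mem_of_le h (Multiset.mem_singleton_self z)
    rcases Multiset.mem_cons.mp hz with rfl | hz
    · exact Or.inr (Or.inl rfl)
    · exact Or.inr (Or.inr (Or.inl (by rw [Multiset.mem_singleton.mp hz])))
  · exact Or.inr (Or.inr (Or.inr (Multiset.eq_of_le_of_card_le h (by simp [h0]))))

private lemma decomp' {α : Type*} {A s : Multiset α} {g : α} {k : ℕ}
    (h : A ≤ Multiset.replicate k g + s) (hs : ∀ x ∈ s, x ≠ g) :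
    ∃ j T, j ≤ k ∧ T ≤ s ∧ A = Multiset.replicate j g + T := by
  classical
  refine ⟨Multiset.card (A.filter (· = g)), A.filter (fun x => ¬ x = g), ?_, ?_, ?_⟩
  · have h1 : A.filter (· = g) ≤ (Multiset.replicate k g + s).filter (· = g) :=
      Multiset.filter_le_filter _ h
    have h2 : (Multiset.replicate k g + s).filter (· = g) = Multiset.replicate k g := by
      rw [Multiset.filter_add,
        Multiset.filter_eq_self.mpr (fun x hx => Multiset.eq_of_mem_replicate hx),
        Multiset.filter_eq_nil.mpr (fun x hx => hs x hx), add_zero]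
    have := Multiset.card_le_card (h2 ▸ h1)
    simpa using this
  · have h1 : A.filter (fun x => ¬ x = g) ≤
        (Multiset.replicate k g + s).filter (fun x => ¬ x = g) :=
      Multiset.filter_le_filter _ h
    have h2 : (Multiset.replicate k g + s).filter (fun x => ¬ x = g) = s := by
      rw [Multiset.filter_add,
        Multiset.filter_eq_nil.mpr (fun x hx => by simp [Multiset.eq_of_mem_replicate hx]),
        Multiset.filter_eq_self.mpr (fun x hx => hs x hx), zero_add]
    exact h2 ▸ h1
  · have h3 : A.filter (· = g) = Multiset.replicate (Multiset.card (A.filter (· = g))) g :=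
      Multiset.eq_replicate_card.mpr (fun b hb => (Multiset.mem_filter.mp hb).2)
    conv_lhs => rw [← Multiset.filter_add_not (· = g) A]
    rw [← h3]

private lemma dvd_bound {n m : ℕ} (h : n ∣ m) (h1 : 0 < m) (h2 : m < 2 * n) : m = n := by
  obtain ⟨c, rfl⟩ := h
  have hc1 : c ≠ 0 := by rintro rfl; omega
  have hc2 : c < 2 := by
    by_contra hc
    push_neg at hc
    have := Nat.mul_le_mul_left n hc
    omega
  have hc : c = 1 := by omega
  subst hc; omega

private lemma smul_zero_iff (g : G) {n : ℕ} (ho : addOrderOf g = n) (k : ℕ) :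
    k • g = 0 ↔ n ∣ k := by
  rw [← ho]; exact addOrderOf_dvd_iff_nsmul_eq_zero.symm

private lemma smul_inj_le (g : G) {n : ℕ} (ho : addOrderOf g = n) {i j : ℕ}
    (hij : i ≤ j) (hj : j < n) (h : i • g = j • g) : i = j := by
  have h1 : (j - i) • g + i • g = j • g := by rw [← add_nsmul]; congr 1; omega
  rw [h, add_eq_right] at h1
  have h2 : n ∣ j - i := (smul_zero_iff g ho _).mp h1
  have h3 : j - i = 0 := Nat.eq_zero_of_dvd_of_lt h2 (by omega)
  omega

private lemma smul_inj (g : G) {n : ℕ} (ho : addOrderOf g = n) {i j : ℕ}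
    (hi : i < n) (hj : j < n) (h : i • g = j • g) : i = j := by
  rcases le_total i j with hle | hle
  · exact smul_inj_le g ho hle hj h
  · exact (smul_inj_le g ho hle hi h.symm).symm
end

section
variable {G : Type*} [AddCommGroup G] {g : G} {n : ℕ}

-- basic facts
private lemma hng (ho : addOrderOf g = n) : n • g = 0 := ho ▸ addOrderOf_nsmul_eq_zero g

private lemma hga (hn : 4 ≤ n) (ho : addOrderOf g = n) : (n - 2) • g ≠ g := by
  intro h
  conv_rhs at h => rw [← one_nsmul g]
  have := smul_inj (i := n - 2) (j := 1) g ho (by omega) (by omega) h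
  omega

private lemma hgb (hn : 4 ≤ n) (ho : addOrderOf g = n) : 2 • g ≠ g := by
  intro h
  conv_rhs at h => rw [← one_nsmul g]
  have := smul_inj (i := 2) (j := 1) g ho (by omega) (by omega) h
  omega

private lemma ha0 (hn : 4 ≤ n) (ho : addOrderOf g = n) : (n - 2) • g ≠ 0 := by
  intro h
  have := (smul_zero_iff g ho _).mp h
  have := Nat.eq_zero_of_dvd_of_lt this (by omega)
  omega

private lemma hb0 (hn : 4 ≤ n) (ho : addOrderOf g = n) : 2 • g ≠ 0 := by
  intro h
  have := (smul_zero_iff g ho _).mp h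
  have := Nat.eq_zero_of_dvd_of_lt this (by omega)
  omega

private lemma hab (hn : 4 ≤ n) (ho : addOrderOf g = n) (h : (n - 2) • g = 2 • g) :
    n - 2 = 2 :=
  smul_inj (i := n - 2) (j := 2) g ho (by omega) (by omega) h

private lemma habsum (hn : 4 ≤ n) (ho : addOrderOf g = n) : (n - 2) • g + 2 • g = 0 := by
  rw [← add_nsmul]
  have : n - 2 + 2 = n := by omega
  rw [this]; exact hng ho

-- minimality of the four atoms
private lemma minU0 (hn : 4 ≤ n) (ho : addOrderOf g = n) :
    IsMinZeroSum (Multiset.replicate n g) := by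
  refine ⟨?_, by rw [Multiset.sum_replicate]; exact hng ho, ?_⟩
  · intro h
    have hcard := congrArg Multiset.card h
    simp at hcard
    omega
  intro T hT hT0 hTs
  have hrep : T = Multiset.replicate (Multiset.card T) g :=
    Multiset.eq_replicate_card.mpr (fun b hb => Multiset.eq_of_mem_replicate (Multiset.mem_of_le hT hb))
  rw [hrep, Multiset.sum_replicate] at hTs
  have hdvd : n ∣ Multiset.card T := (smul_zero_iff g ho _).mp hTs
  have hcle : Multiset.card T ≤ n := by simpa using Multiset.card_le_card hT
  have hc0 : Multiset.card T ≠ 0 := by simpa [Multiset.card_eq_zero] using hT0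
  have : Multiset.card T = n := dvd_bound hdvd (by omega) (by omega)
  rw [hrep, this]

private lemma minU1 (hn : 4 ≤ n) (ho : addOrderOf g = n) :
    IsMinZeroSum (Multiset.replicate 2 g + {(n - 2) • g}) := by
  refine ⟨by simp, ?_, ?_⟩
  · rw [Multiset.sum_add, Multiset.sum_replicate, Multiset.sum_singleton, ← add_nsmul]
    have : 2 + (n - 2) = n := by omega
    rw [this]; exact hng ho
  · intro T hT hT0 hTs
    obtain ⟨j, T', hj, hT', hTeq⟩ := decomp' hT
      (fun x hx => by rw [Multiset.mem_singleton.mp hx]; exact hga hn ho)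
    rcases Multiset.le_singleton.mp hT' with rfl | rfl
    · rw [hTeq, add_zero, Multiset.sum_replicate] at hTs
      have := Nat.eq_zero_of_dvd_of_lt ((smul_zero_iff g ho _).mp hTs) (by omega)
      rw [hTeq, add_zero, this] at hT0
      simp at hT0
    · rw [hTeq, Multiset.sum_add, Multiset.sum_replicate, Multiset.sum_singleton,
        ← add_nsmul] at hTs
      have hdvd : n ∣ j + (n - 2) := (smul_zero_iff g ho _).mp hTs
      have : j + (n - 2) = n := dvd_bound hdvd (by omega) (by omega)
      have hj2 : j = 2 := by omega
      rw [hTeq, hj2]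

private lemma minU2 (hn : 4 ≤ n) (ho : addOrderOf g = n) :
    IsMinZeroSum (Multiset.replicate (n - 2) g + {2 • g}) := by
  refine ⟨by simp, ?_, ?_⟩
  · rw [Multiset.sum_add, Multiset.sum_replicate, Multiset.sum_singleton, ← add_nsmul]
    have : n - 2 + 2 = n := by omega
    rw [this]; exact hng ho
  · intro T hT hT0 hTs
    obtain ⟨j, T', hj, hT', hTeq⟩ := decomp' hT
      (fun x hx => by rw [Multiset.mem_singleton.mp hx]; exact hgb hn ho)
    rcases Multiset.le_singleton.mp hT' with rfl | rfl
    · rw [hTeq, add_zero, Multiset.sum_replicate] at hTs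
      have := Nat.eq_zero_of_dvd_of_lt ((smul_zero_iff g ho _).mp hTs) (by omega)
      rw [hTeq, add_zero, this] at hT0
      simp at hT0
    · rw [hTeq, Multiset.sum_add, Multiset.sum_replicate, Multiset.sum_singleton,
        ← add_nsmul] at hTs
      have hdvd : n ∣ j + 2 := (smul_zero_iff g ho _).mp hTs
      have : j + 2 = n := dvd_bound hdvd (by omega) (by omega)
      have hj2 : j = n - 2 := by omega
      rw [hTeq, hj2]

private lemma minU3 (hn : 4 ≤ n) (ho : addOrderOf g = n) :
    IsMinZeroSum ({(n - 2) • g, 2 • g} : Multiset G) := by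
  refine ⟨by simp, ?_, ?_⟩
  · simp [habsum hn ho]
  · intro T hT hT0 hTs
    rcases le_pair' hT with rfl | rfl | rfl | rfl
    · exact absurd rfl hT0
    · rw [Multiset.sum_singleton] at hTs; exact absurd hTs (ha0 hn ho)
    · rw [Multiset.sum_singleton] at hTs; exact absurd hTs (hb0 hn ho)
    · rfl
end

section
variable {G : Type*} [AddCommGroup G] {g : G} {n : ℕ}

private lemma atom_classify (hn : 4 ≤ n) (ho : addOrderOf g = n) {A : Multiset G}
    (hA : IsMinZeroSum A)
    (hAB : A ≤ Multiset.replicate n g + {(n - 2) • g, 2 • g}) :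
    A = Multiset.replicate n g ∨ A = Multiset.replicate 2 g + {(n - 2) • g} ∨
      A = Multiset.replicate (n - 2) g + {2 • g} ∨ A = {(n - 2) • g, 2 • g} := by
  obtain ⟨hA0, hAs, hAmin⟩ := hA
  obtain ⟨j, T, hj, hT, hTeq⟩ := decomp' hAB (by
    intro x hx
    rcases Multiset.mem_cons.mp hx with rfl | hx
    · exact hga hn ho
    · rw [Multiset.mem_singleton.mp hx]; exact hgb hn ho)
  rcases le_pair' hT with rfl | rfl | rfl | rfl
  · left
    rw [hTeq, add_zero, Multiset.sum_replicate] at hAs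
    rw [hTeq, add_zero] at hA0 ⊢
    have hj0 : j ≠ 0 := by rintro rfl; simp at hA0
    have : j = n := dvd_bound ((smul_zero_iff g ho _).mp hAs) (by omega) (by omega)
    rw [this]
  · right; left
    rw [hTeq, Multiset.sum_add, Multiset.sum_replicate, Multiset.sum_singleton,
      ← add_nsmul] at hAs
    have : j + (n - 2) = n := dvd_bound ((smul_zero_iff g ho _).mp hAs) (by omega) (by omega)
    have hj2 : j = 2 := by omega
    rw [hTeq, hj2]
  · right; right; left
    rw [hTeq, Multiset.sum_add, Multiset.sum_replicate, Multiset.sum_singleton,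
      ← add_nsmul] at hAs
    have : j + 2 = n := dvd_bound ((smul_zero_iff g ho _).mp hAs) (by omega) (by omega)
    have hj2 : j = n - 2 := by omega
    rw [hTeq, hj2]
  · right; right; right
    have hle : ({(n - 2) • g, 2 • g} : Multiset G) ≤ A := by
      rw [hTeq]; exact le_add_self
    have := hAmin _ hle (by simp) (by simp [habsum hn ho])
    exact this.symm

private lemma rep_of_all_eq {V R : Multiset G} (hcard : Multiset.card V = Multiset.card R)
    (h0 : Multiset.card V ≠ 0) {z : Multiset (Multiset G)}
    (hall : ∀ A ∈ z, A = V) (hs : z.sum = R) : z = {V} := by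
  have hz : z = Multiset.replicate (Multiset.card z) V := Multiset.eq_replicate_card.mpr hall
  have hsum : R = Multiset.card z • V := by
    rw [← hs]
    conv_lhs => rw [hz]
    rw [Multiset.sum_replicate]
  have hcR : Multiset.card R = Multiset.card z * Multiset.card V := by
    rw [hsum, Multiset.card_nsmul]
  have h1 : Multiset.card z * Multiset.card V = 1 * Multiset.card V := by
    rw [one_mul]; omega
  have h2 : Multiset.card z = 1 := Nat.eq_of_mul_eq_mul_right (by omega) h1
  rw [hz, h2, Multiset.replicate_one]

private lemma fact_classify (hn : 4 ≤ n) (ho : addOrderOf g = n) {z : Multiset (Multiset G)}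
    (hz : IsFactorization (Multiset.replicate n g + {(n - 2) • g, 2 • g}) z) :
    z = {Multiset.replicate n g, ({(n - 2) • g, 2 • g} : Multiset G)} ∨
      z = {Multiset.replicate 2 g + {(n - 2) • g}, Multiset.replicate (n - 2) g + {2 • g}} := by
  classical
  obtain ⟨hatoms, hsum⟩ := hz
  set a := (n - 2) • g with ha
  set b := 2 • g with hb
  set U0 := Multiset.replicate n g with hU0
  set U1 := Multiset.replicate 2 g + {a} with hU1
  set U2 := Multiset.replicate (n - 2) g + {b} with hU2
  set U3 := ({a, b} : Multiset G) with hU3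
  set B := U0 + U3 with hB
  -- cards
  have cU0 : Multiset.card U0 = n := by simp [hU0]
  have cU1 : Multiset.card U1 = 3 := by simp [hU1]
  have cU2 : Multiset.card U2 = n - 1 := by simp [hU2]; omega
  have cU3 : Multiset.card U3 = 2 := by simp [hU3]
  have hUR : U1 + U2 = B := by
    rw [hU1, hU2, hB, hU0, hU3, add_add_add_comm, ← Multiset.replicate_add]
    have h2n : 2 + (n - 2) = n := by omega
    rw [h2n, Multiset.insert_eq_cons, ← Multiset.singleton_add]
  have hzne : z ≠ 0 := by
    rintro rfl
    rw [Multiset.sum_zero] at hsum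
    have := congrArg Multiset.card hsum
    simp [hB, hU0, hU3] at this
  obtain ⟨A, hAmem⟩ := Multiset.exists_mem_of_ne_zero hzne
  set z₀ := z.erase A with hz₀
  have hzeq : z = A ::ₘ z₀ := (Multiset.cons_erase hAmem).symm
  have hsum' : A + z₀.sum = B := by rw [hzeq, Multiset.sum_cons] at hsum; exact hsum
  have hmem_le : ∀ A' ∈ z₀, A' ≤ z₀.sum := fun A' h =>
    Multiset.single_le_sum (fun x _ => zero_le) A' h
  have hsub_atom : ∀ A' ∈ z₀, IsMinZeroSum A' := fun A' h =>
    hatoms A' (by rw [hzeq]; exact Multiset.mem_cons_of_mem h)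
  have hz₀B : z₀.sum ≤ B := by rw [← hsum']; exact le_add_self
  have hclass : ∀ A' ∈ z₀, A' = U0 ∨ A' = U1 ∨ A' = U2 ∨ A' = U3 := fun A' h =>
    atom_classify hn ho (hsub_atom A' h) (le_trans (hmem_le A' h) hz₀B)
  have hAclass : A = U0 ∨ A = U1 ∨ A = U2 ∨ A = U3 :=
    atom_classify hn ho (hatoms A hAmem) (by show A ≤ B; rw [← hsum']; exact le_self_add)
  -- helper facts
  have hganeq : a ≠ g := hga hn ho
  have hgbneq : b ≠ g := hgb hn ho
  have hU1U2 : a = b → U1 = U2 := by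
    intro h
    have h4 : n - 2 = 2 := hab hn ho h
    rw [hU1, hU2, h4, h]
  rcases hAclass with rfl | rfl | rfl | rfl
  · -- A = U0, z₀.sum = U3
    left
    have hs0 : z₀.sum = U3 := by
      have := hsum'
      rw [hB] at this
      exact add_left_cancel this
    have hall : ∀ A' ∈ z₀, A' = U3 := by
      intro A' h
      have hle : A' ≤ U3 := hs0 ▸ hmem_le A' h
      have hcle : Multiset.card A' ≤ 2 := by
        have := Multiset.card_le_card hle; omega
      rcases hclass A' h with rfl | rfl | rfl | rfl
      · omega
      · omega
      · omega
      · rfl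
    have : z₀ = {U3} := rep_of_all_eq rfl (by omega) hall hs0
    rw [hzeq, this]
    rfl
  · -- A = U1, z₀.sum = U2
    right
    have hs0 : z₀.sum = U2 := by
      have := hsum'
      rw [← hUR] at this
      exact add_left_cancel this
    have hall : ∀ A' ∈ z₀, A' = U2 := by
      intro A' h
      have hle : A' ≤ U2 := hs0 ▸ hmem_le A' h
      rcases hclass A' h with rfl | rfl | rfl | rfl
      · -- U0 ≤ U2 : count g contradiction
        exfalso
        have hcnt := Multiset.count_le_of_le g hle
        rw [hU0, hU2] at hcnt
        simp [Multiset.count_replicate, Multiset.count_singleton, Ne.symm hgbneq] at hcnt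
        omega
      · -- U1 ≤ U2 : then a = b
        have hamem : a ∈ U2 := Multiset.mem_of_le hle (by rw [hU1]; simp)
        rw [hU2] at hamem
        rcases Multiset.mem_add.mp hamem with h' | h'
        · exact absurd (Multiset.eq_of_mem_replicate h') hganeq
        · exact hU1U2 (Multiset.mem_singleton.mp h')
      · rfl
      · -- U3 ≤ U2 : then a = b and count b contradiction
        exfalso
        have hamem : a ∈ U2 := Multiset.mem_of_le hle (by rw [hU3]; simp)
        rw [hU2] at hamem
        rcases Multiset.mem_add.mp hamem with h' | h'
        · exact absurd (Multiset.eq_of_mem_replicate h') hganeq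
        · have hab' : a = b := Multiset.mem_singleton.mp h'
          have hcnt := Multiset.count_le_of_le b hle
          rw [hU3, hU2, hab'] at hcnt
          simp [Multiset.count_replicate, Multiset.count_singleton, Ne.symm hgbneq] at hcnt
    have : z₀ = {U2} := rep_of_all_eq rfl (by omega) hall hs0
    rw [hzeq, this]
    rfl
  · -- A = U2, z₀.sum = U1
    right
    have hs0 : z₀.sum = U1 := by
      have := hsum'
      rw [← hUR, add_comm U1 U2] at this
      exact add_left_cancel this
    have hall : ∀ A' ∈ z₀, A' = U1 := by
      intro A' h
      have hle : A' ≤ U1 := hs0 ▸ hmem_le A' h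
      rcases hclass A' h with rfl | rfl | rfl | rfl
      · exfalso
        have hcnt := Multiset.count_le_of_le g hle
        rw [hU0, hU1] at hcnt
        simp [Multiset.count_replicate, Multiset.count_singleton, Ne.symm hganeq] at hcnt
        omega
      · rfl
      · have hbmem : b ∈ U1 := Multiset.mem_of_le hle (by rw [hU2]; simp)
        rw [hU1] at hbmem
        rcases Multiset.mem_add.mp hbmem with h' | h'
        · exact absurd (Multiset.eq_of_mem_replicate h') hgbneq
        · exact (hU1U2 (Multiset.mem_singleton.mp h').symm).symm
      · exfalso
        have hbmem : b ∈ U1 := Multiset.mem_of_le hle (by rw [hU3]; simp)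
        rw [hU1] at hbmem
        rcases Multiset.mem_add.mp hbmem with h' | h'
        · exact absurd (Multiset.eq_of_mem_replicate h') hgbneq
        · have hab' : a = b := (Multiset.mem_singleton.mp h').symm
          have hcnt := Multiset.count_le_of_le a hle
          rw [hU3, hU1, ← hab'] at hcnt
          rw [Multiset.count_add, Multiset.count_replicate, Multiset.count_singleton] at hcnt
          have h2 : Multiset.count a ({a, a} : Multiset G) = 2 := by simp
          rw [h2, if_neg (Ne.symm hganeq), if_pos rfl] at hcnt
          omega
    have : z₀ = {U1} := rep_of_all_eq rfl (by omega) hall hs0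
    rw [hzeq, this, Multiset.pair_comm]
    rfl
  · -- A = U3, z₀.sum = U0
    left
    have hs0 : z₀.sum = U0 := by
      have := hsum'
      rw [hB, add_comm U0 U3] at this
      exact add_left_cancel this
    have hall : ∀ A' ∈ z₀, A' = U0 := by
      intro A' h
      have hle : A' ≤ U0 := hs0 ▸ hmem_le A' h
      rcases hclass A' h with rfl | rfl | rfl | rfl
      · rfl
      · exfalso
        have hamem : a ∈ U0 := Multiset.mem_of_le hle (by rw [hU1]; simp)
        exact hganeq (Multiset.eq_of_mem_replicate hamem)
      · exfalso
        have hbmem : b ∈ U0 := Multiset.mem_of_le hle (by rw [hU2]; simp)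
        exact hgbneq (Multiset.eq_of_mem_replicate hbmem)
      · exfalso
        have hamem : a ∈ U0 := Multiset.mem_of_le hle (by rw [hU3]; simp)
        exact hganeq (Multiset.eq_of_mem_replicate hamem)
    have : z₀ = {U0} := rep_of_all_eq rfl (by omega) hall hs0
    rw [hzeq, this, Multiset.pair_comm]
    rfl
end

theorem stmt5 (G : Type*) [AddCommGroup G] (g : G) (n : ℕ) (hn : 4 ≤ n)
    (ho : addOrderOf g = n) :
    catenaryDeg (Multiset.replicate n g + {(n - 2) • g, 2 • g}) = 2 := by
  classical
  letI : DecidableEq (Multiset G) := Classical.decEq (Multiset G)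
  set a := (n - 2) • g with ha
  set b := 2 • g with hb
  set U0 := Multiset.replicate n g with hU0
  set U1 := Multiset.replicate 2 g + {a} with hU1
  set U2 := Multiset.replicate (n - 2) g + {b} with hU2
  set U3 := ({a, b} : Multiset G) with hU3
  set B := U0 + U3 with hB
  set z1 := ({U0, U3} : Multiset (Multiset G)) with hz1
  set z2 := ({U1, U2} : Multiset (Multiset G)) with hz2
  have hf1 : IsFactorization B z1 := by
    constructor
    · intro A hA
      rcases Multiset.mem_cons.mp hA with rfl | hA
      · exact minU0 hn ho
      · rw [Multiset.mem_singleton.mp hA]; exact minU3 hn ho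
    · rw [hz1, Multiset.insert_eq_cons, Multiset.sum_cons, Multiset.sum_singleton, hB]
  have hf2 : IsFactorization B z2 := by
    constructor
    · intro A hA
      rcases Multiset.mem_cons.mp hA with rfl | hA
      · exact minU1 hn ho
      · rw [Multiset.mem_singleton.mp hA]; exact minU2 hn ho
    · rw [hz2, Multiset.insert_eq_cons, Multiset.sum_cons, Multiset.sum_singleton]
      rw [hU1, hU2, hB, hU0, hU3, add_add_add_comm, ← Multiset.replicate_add]
      have h2n : 2 + (n - 2) = n := by omega
      rw [h2n, Multiset.insert_eq_cons, ← Multiset.singleton_add]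
  have key : ∀ z, IsFactorization B z → z = z1 ∨ z = z2 := fun z hz =>
    fact_classify hn ho hz
  have cU0 : Multiset.card U0 = n := by simp [hU0]
  have cU1 : Multiset.card U1 = 3 := by simp [hU1]
  have cU2 : Multiset.card U2 = n - 1 := by simp [hU2]; omega
  have cU3 : Multiset.card U3 = 2 := by simp [hU3]
  have hU0ne1 : U0 ≠ U1 := fun h => by
    have := congrArg Multiset.card h; rw [cU0, cU1] at this; omega
  have hU0ne2 : U0 ≠ U2 := fun h => by
    have := congrArg Multiset.card h; rw [cU0, cU2] at this; omega
  have hU3ne1 : U3 ≠ U1 := fun h => by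
    have := congrArg Multiset.card h; rw [cU3, cU1] at this; omega
  have hU3ne2 : U3 ≠ U2 := fun h => by
    have := congrArg Multiset.card h; rw [cU3, cU2] at this; omega
  have hU0z2 : U0 ∉ z2 := by
    rw [hz2]
    intro hmem
    rcases Multiset.mem_cons.mp hmem with h | h
    · exact hU0ne1 h
    · exact hU0ne2 (Multiset.mem_singleton.mp h)
  have hU1z1 : U1 ∉ z1 := by
    rw [hz1]
    intro hmem
    rcases Multiset.mem_cons.mp hmem with h | h
    · exact hU0ne1 h.symm
    · exact hU3ne1 (Multiset.mem_singleton.mp h).symm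
  have hU2z1 : U2 ∉ z1 := by
    rw [hz1]
    intro hmem
    rcases Multiset.mem_cons.mp hmem with h | h
    · exact hU0ne2 h.symm
    · exact hU3ne2 (Multiset.mem_singleton.mp h).symm
  have hz1ne : z1 ≠ z2 := fun h => hU0z2 (h ▸ Multiset.mem_cons_self U0 {U3})
  have cz1 : Multiset.card z1 = 2 := by simp [hz1]
  have cz2 : Multiset.card z2 = 2 := by simp [hz2]
  have hdist_le : ∀ z z' : Multiset (Multiset G), Multiset.card z = 2 →
      Multiset.card z' = 2 → factDist z z' ≤ 2 := by
    intro z z' h h'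
    show max _ _ ≤ 2
    apply max_le
    · exact le_trans (Multiset.card_le_card tsub_le_self) (le_of_eq h)
    · exact le_trans (Multiset.card_le_card tsub_le_self) (le_of_eq h')
  have hdist_lb : 2 ≤ factDist z1 z2 := by
    show 2 ≤ max _ _
    refine le_trans ?_ (le_max_left _ _)
    have hsub : z1 - z2 = z1 := by
      rw [hz2, Multiset.insert_eq_cons, Multiset.sub_cons, Multiset.sub_singleton,
        Multiset.erase_of_notMem hU1z1, Multiset.erase_of_notMem hU2z1]
    rw [hsub, cz1]
  have h2mem : 2 ∈ {N : ℕ | ∀ z z', IsFactorization B z → IsFactorization B z' →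
      Relation.ReflTransGen (fun x y => IsFactorization B y ∧ factDist x y ≤ N) z z'} := by
    intro z z' hz hz'
    refine Relation.ReflTransGen.single ⟨hz', ?_⟩
    have h1 : Multiset.card z = 2 := by rcases key z hz with rfl | rfl; exacts [cz1, cz2]
    have h2 : Multiset.card z' = 2 := by rcases key z' hz' with rfl | rfl; exacts [cz1, cz2]
    exact hdist_le _ _ h1 h2
  have hnotlow : ∀ N : ℕ, N ≤ 1 →
      ¬ (N ∈ {N : ℕ | ∀ z z', IsFactorization B z → IsFactorization B z' →
        Relation.ReflTransGen (fun x y => IsFactorization B y ∧ factDist x y ≤ N) z z'}) := by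
    intro N hN hmem
    have hchain := hmem z1 z2 hf1 hf2
    have hfix : ∀ w, Relation.ReflTransGen
        (fun x y => IsFactorization B y ∧ factDist x y ≤ N) z1 w → w = z1 := by
      intro w hw
      induction hw with
      | refl => rfl
      | tail h1 h2 ih =>
        rcases key _ h2.1 with h3 | h3
        · exact h3
        · exfalso
          have hd := h2.2
          rw [ih, h3] at hd
          omega
    exact hz1ne (hfix z2 hchain).symm
  show sInf {N : ℕ | ∀ z z', IsFactorization B z → IsFactorization B z' →
      Relation.ReflTransGen (fun x y => IsFactorization B y ∧ factDist x y ≤ N) z z'} = 2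
  apply le_antisymm (Nat.sInf_le h2mem)
  by_contra hlt
  push_neg at hlt
  have hmem := Nat.sInf_mem ⟨2, h2mem⟩
  exact hnotlow _ (by omega) hmem
end

section
/- Let G be an abelian group containing two independent elements e_1, e_2 of order 3. Then the zero-sum sequence B = (e_1+e_2)^4 · e_1^2 · e_2^2 over G has catenary degree c(B) = 2. -/
open Multiset

lemma exists_eq_add_of_le_add {α : Type*} {T s t : Multiset α} (h : T ≤ s + t) :
    ∃ s' ≤ s, ∃ t' ≤ t, T = s' + t' := by
  classical
  refine ⟨T ∩ s, inter_le_right, T - s, tsub_le_iff_left.mpr h, ?_⟩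
  rw [add_comm, sub_add_inter]

lemma sum_sub_eq_sum_sub_of_sum_eq {M : Type*} [DecidableEq M] [AddCancelCommMonoid M]
    {z z' : Multiset M} (h : z.sum = z'.sum) : (z - z').sum = (z' - z).sum := by
  have hz := congrArg Multiset.sum (sub_add_inter z z')
  have hz' := congrArg Multiset.sum (sub_add_inter z' z)
  rw [sum_add] at hz hz'
  rw [inter_comm] at hz'
  exact add_right_cancel (hz.trans (h.trans hz'.symm))

section Catenary

variable {G : Type*} [AddCommGroup G]

def IsCatenaryBound (B : Multiset G) (N : ℕ) : Prop :=
  ∀ z z', IsFactorization B z → IsFactorization B z' →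
    Relation.ReflTransGen (fun x y => IsFactorization B y ∧ factDist x y ≤ N) z z'

lemma factDist_le_max_card (z z' : Multiset (Multiset G)) :
    factDist z z' ≤ max (card z) (card z') := by
  let _ : DecidableEq (Multiset G) := Classical.decEq _
  exact max_le_max (card_le_card (tsub_le_self)) (card_le_card (tsub_le_self))

lemma isCatenaryBound_of_card_le {B : Multiset G} {N : ℕ}
    (h : ∀ z, IsFactorization B z → card z ≤ N) : IsCatenaryBound B N :=
  fun z z' hz hz' =>
    .single ⟨hz', (factDist_le_max_card z z').trans (max_le (h z hz) (h z' hz'))⟩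

-- Two factorizations at distance at most one would differ by at most one atom on each side,
-- and cancelling their common part would leave an atom equal to `0` or to a second copy of itself.
lemma two_le_factDist {B : Multiset G} {z z' : Multiset (Multiset G)}
    (hz : IsFactorization B z) (hz' : IsFactorization B z') (hne : z ≠ z') :
    2 ≤ factDist z z' := by
  let _ : DecidableEq (Multiset G) := Classical.decEq _
  by_contra! hlt
  have hd : card (z - z') ≤ 1 := (le_max_left _ _).trans (Nat.le_of_lt_succ hlt)
  have hd' : card (z' - z) ≤ 1 := (le_max_right _ _).trans (Nat.le_of_lt_succ hlt)
  have hsum := sum_sub_eq_sum_sub_of_sum_eq (hz.2.trans hz'.2.symm)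
  have atom_ne_zero : ∀ {y y' : Multiset (Multiset G)}, IsFactorization B y → ∀ A ∈ y - y', A ≠ 0 :=
    fun hy A hA => (hy.1 A (mem_of_le tsub_le_self hA)).1
  rcases Nat.le_one_iff_eq_zero_or_eq_one.mp hd with h | h <;>
    rcases Nat.le_one_iff_eq_zero_or_eq_one.mp hd' with h' | h'
  · exact hne (le_antisymm (tsub_eq_zero_iff_le.mp (card_eq_zero.mp h))
      (tsub_eq_zero_iff_le.mp (card_eq_zero.mp h')))
  · obtain ⟨A, hA⟩ := card_eq_one.mp h'
    rw [card_eq_zero.mp h, hA] at hsum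
    exact atom_ne_zero hz' A (hA ▸ mem_singleton_self A) (by simpa using hsum.symm)
  · obtain ⟨A, hA⟩ := card_eq_one.mp h
    rw [card_eq_zero.mp h', hA] at hsum
    exact atom_ne_zero hz A (hA ▸ mem_singleton_self A) (by simpa using hsum)
  · obtain ⟨A, hA⟩ := card_eq_one.mp h
    obtain ⟨A', hA'⟩ := card_eq_one.mp h'
    rw [hA, hA', sum_singleton, sum_singleton] at hsum
    have h₁ : A ∈ z - z' := hA ▸ mem_singleton_self A
    have h₂ : A ∈ z' - z := hsum ▸ hA' ▸ mem_singleton_self A'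
    rw [mem_sub] at h₁ h₂
    omega

lemma IsCatenaryBound.two_le {B : Multiset G} {N : ℕ} (hN : IsCatenaryBound B N)
    {z z' : Multiset (Multiset G)} (hz : IsFactorization B z) (hz' : IsFactorization B z')
    (hne : z ≠ z') : 2 ≤ N := by
  by_contra! hN2
  suffices ∀ y, Relation.ReflTransGen (fun x y => IsFactorization B y ∧ factDist x y ≤ N) z y →
      y = z from hne (this z' (hN z z' hz hz')).symm
  intro y hy
  induction hy with
  | refl => rfl
  | tail _ hstep ih =>
    subst ih
    by_contra hne'
    exact absurd (two_le_factDist hz hstep.1 (Ne.symm hne')) (by omega)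

lemma card_mul_le_card_of_isFactorization {B : Multiset G} {z : Multiset (Multiset G)} {k : ℕ}
    (hz : IsFactorization B z) (hk : ∀ A ≤ B, IsMinZeroSum A → k ≤ card A) :
    card z * k ≤ card B := by
  rw [← hz.2, ← join, card_join, ← smul_eq_mul]
  refine (card_map card z).symm ▸ card_nsmul_le_sum fun n hn => ?_
  obtain ⟨A, hA, rfl⟩ := mem_map.mp hn
  exact hk A (hz.2 ▸ le_sum_of_mem hA) (hz.1 A hA)

end Catenary

section TriSeq

variable {G : Type*} [AddCommGroup G] (e₁ e₂ : G)

def triSeq (a b c : ℕ) : Multiset G :=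
  replicate a (e₁ + e₂) + replicate b e₁ + replicate c e₂

lemma triSeq_add (a b c a' b' c' : ℕ) :
    triSeq e₁ e₂ a b c + triSeq e₁ e₂ a' b' c' = triSeq e₁ e₂ (a + a') (b + b') (c + c') := by
  simp only [triSeq, replicate_add]
  abel

lemma card_triSeq (a b c : ℕ) : card (triSeq e₁ e₂ a b c) = a + b + c := by
  simp [triSeq]

lemma sum_triSeq (a b c : ℕ) : (triSeq e₁ e₂ a b c).sum = (a + b) • e₁ + (a + c) • e₂ := by
  simp only [triSeq, sum_add, sum_replicate, smul_add, add_nsmul]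
  abel

variable {e₁ e₂}

lemma triSeq_ne_zero_iff {a b c : ℕ} : triSeq e₁ e₂ a b c ≠ 0 ↔ 0 < a + b + c := by
  rw [← card_pos, card_triSeq]

lemma exists_eq_triSeq_of_le {T : Multiset G} {a b c : ℕ} (h : T ≤ triSeq e₁ e₂ a b c) :
    ∃ a' ≤ a, ∃ b' ≤ b, ∃ c' ≤ c, T = triSeq e₁ e₂ a' b' c' := by
  obtain ⟨T₀₁, h₀₁, T₂, h₂, rfl⟩ := exists_eq_add_of_le_add h
  obtain ⟨T₀, h₀, T₁, h₁, rfl⟩ := exists_eq_add_of_le_add h₀₁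
  obtain ⟨a', ha, rfl⟩ := le_replicate_iff.mp h₀
  obtain ⟨b', hb, rfl⟩ := le_replicate_iff.mp h₁
  obtain ⟨c', hc, rfl⟩ := le_replicate_iff.mp h₂
  exact ⟨a', ha, b', hb, c', hc, rfl⟩

lemma nsmul_add_nsmul_eq_zero_iff
    (hdisj : Disjoint (AddSubgroup.zmultiples e₁) (AddSubgroup.zmultiples e₂)) (m n : ℕ) :
    m • e₁ + n • e₂ = 0 ↔ addOrderOf e₁ ∣ m ∧ addOrderOf e₂ ∣ n := by
  simp only [addOrderOf_dvd_iff_nsmul_eq_zero]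
  refine ⟨fun h => ?_, fun ⟨h₁, h₂⟩ => by rw [h₁, h₂, add_zero]⟩
  have h₁ : m • e₁ = 0 := AddSubgroup.disjoint_def.mp hdisj
    (AddSubgroup.nsmul_mem_zmultiples e₁ m)
    (eq_neg_of_add_eq_zero_left h ▸ neg_mem (AddSubgroup.nsmul_mem_zmultiples e₂ n))
  exact ⟨h₁, by rwa [h₁, zero_add] at h⟩

variable (hdisj : Disjoint (AddSubgroup.zmultiples e₁) (AddSubgroup.zmultiples e₂))
include hdisj

lemma sum_triSeq_eq_zero_iff (a b c : ℕ) :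
    (triSeq e₁ e₂ a b c).sum = 0 ↔ addOrderOf e₁ ∣ a + b ∧ addOrderOf e₂ ∣ a + c := by
  rw [sum_triSeq, nsmul_add_nsmul_eq_zero_iff hdisj]

lemma isMinZeroSum_triSeq {a b c : ℕ} (hpos : 0 < a + b + c)
    (hsum : addOrderOf e₁ ∣ a + b ∧ addOrderOf e₂ ∣ a + c)
    (hmin : ∀ a' ≤ a, ∀ b' ≤ b, ∀ c' ≤ c, 0 < a' + b' + c' →
      addOrderOf e₁ ∣ a' + b' → addOrderOf e₂ ∣ a' + c' → a' = a ∧ b' = b ∧ c' = c) :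
    IsMinZeroSum (triSeq e₁ e₂ a b c) := by
  refine ⟨fun h => ?_, (sum_triSeq_eq_zero_iff hdisj a b c).mpr hsum, fun T hT hT0 hTsum => ?_⟩
  · exact triSeq_ne_zero_iff.mpr hpos h
  obtain ⟨a', ha, b', hb, c', hc, rfl⟩ := exists_eq_triSeq_of_le hT
  rw [sum_triSeq_eq_zero_iff hdisj] at hTsum
  obtain ⟨rfl, rfl, rfl⟩ :=
    hmin a' ha b' hb c' hc (triSeq_ne_zero_iff.mp hT0) hTsum.1 hTsum.2
  rfl

variable (h₁ : addOrderOf e₁ = 3) (h₂ : addOrderOf e₂ = 3)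
include h₁ h₂

-- Both exponent sums `a + b` and `a + c` are multiples of `3`, and they cannot both vanish.
lemma three_le_card_of_le_triSeq {T : Multiset G} {a b c : ℕ} (hT : T ≤ triSeq e₁ e₂ a b c)
    (hT0 : T ≠ 0) (hTsum : T.sum = 0) : 3 ≤ card T := by
  obtain ⟨a', -, b', -, c', -, rfl⟩ := exists_eq_triSeq_of_le hT
  rw [sum_triSeq_eq_zero_iff hdisj, h₁, h₂] at hTsum
  have := triSeq_ne_zero_iff.mp hT0
  rw [card_triSeq]
  omega

end TriSeq

theorem stmt6 (G : Type*) [AddCommGroup G] (e₁ e₂ : G)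
    (h1 : addOrderOf e₁ = 3) (h2 : addOrderOf e₂ = 3)
    (hind : ∀ x : G, x ∈ AddSubgroup.zmultiples e₁ → x ∈ AddSubgroup.zmultiples e₂ → x = 0) :
    catenaryDeg (Multiset.replicate 4 (e₁ + e₂) + Multiset.replicate 2 e₁ +
      Multiset.replicate 2 e₂) = 2 := by
  change catenaryDeg (triSeq e₁ e₂ 4 2 2) = 2
  have hdisj : Disjoint (AddSubgroup.zmultiples e₁) (AddSubgroup.zmultiples e₂) :=
    AddSubgroup.disjoint_def.mpr (hind _ · ·)
  have hU : IsMinZeroSum (triSeq e₁ e₂ 3 0 0) :=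
    isMinZeroSum_triSeq hdisj (by omega) (by rw [h1, h2]; omega)
      (by rw [h1, h2]; intro _ _ _ _ _ _ _ _ _; omega)
  have hX : IsMinZeroSum (triSeq e₁ e₂ 2 1 1) :=
    isMinZeroSum_triSeq hdisj (by omega) (by rw [h1, h2]; omega)
      (by rw [h1, h2]; intro _ _ _ _ _ _ _ _ _; omega)
  have hW : IsMinZeroSum (triSeq e₁ e₂ 1 2 2) :=
    isMinZeroSum_triSeq hdisj (by omega) (by rw [h1, h2]; omega)
      (by rw [h1, h2]; intro _ _ _ _ _ _ _ _ _; omega)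
  have hXX : IsFactorization (triSeq e₁ e₂ 4 2 2) {triSeq e₁ e₂ 2 1 1, triSeq e₁ e₂ 2 1 1} :=
    ⟨by simpa using hX, by simp [triSeq_add]⟩
  have hUW : IsFactorization (triSeq e₁ e₂ 4 2 2) {triSeq e₁ e₂ 3 0 0, triSeq e₁ e₂ 1 2 2} :=
    ⟨by simp [hU, hW], by simp [triSeq_add]⟩
  have hne : ({triSeq e₁ e₂ 2 1 1, triSeq e₁ e₂ 2 1 1} : Multiset (Multiset G)) ≠
      {triSeq e₁ e₂ 3 0 0, triSeq e₁ e₂ 1 2 2} := fun h =>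
    absurd (congrArg (map card) h) (by simp [card_triSeq]; decide)
  refine IsLeast.csInf_eq ⟨isCatenaryBound_of_card_le fun z hz => ?_,
    fun N hN => IsCatenaryBound.two_le hN hXX hUW hne⟩
  have := card_mul_le_card_of_isFactorization hz fun A hA hAmin =>
    three_le_card_of_le_triSeq hdisj h1 h2 hA hAmin.1 hAmin.2.1
  rw [card_triSeq] at this
  omega
end

section
/- Let G be a finite abelian group with |G| ≥ 3 and let m be an integer with 3 ≤ m ≤ D(G). Then there exist a minimal zero-sum sequence U over G of length m, say U = g_1·...·g_m, such that for A = U·(−U) (where −U = (−g_1)·...·(−g_m)) the tame degree t(A, U) equals m. In particular, [3, D(G)] ⊆ Ta(G). -/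
section aux
variable {G : Type*} [AddCommGroup G]

lemma aux_mem_le_sum {α : Type*} {z : Multiset (Multiset α)} {W : Multiset α} (h : W ∈ z) :
    W ≤ z.sum := by
  obtain ⟨w, rfl⟩ := Multiset.exists_cons_of_mem h
  rw [Multiset.sum_cons]
  exact Multiset.le_add_right _ _

lemma aux_sum_map_neg (U : Multiset G) : (U.map (fun x => -x)).sum = -U.sum := by
  induction U using Multiset.induction_on with
  | empty => simp
  | cons a s ih => simp [Multiset.sum_cons, ih]; abel

lemma aux_neg_min {U : Multiset G} (hU : IsMinZeroSum U) :
    IsMinZeroSum (U.map (fun x => -x)) := by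
  obtain ⟨h0, hsum, hmin⟩ := hU
  refine ⟨by rwa [Ne, Multiset.map_eq_zero], by rw [aux_sum_map_neg, hsum, neg_zero], ?_⟩
  intro T hT hT0 hTs
  have hT' : T.map (fun x => -x) ≤ U := by
    have := Multiset.map_le_map (f := fun x : G => -x) hT
    simpa [Multiset.map_map, Function.comp] using this
  have h1 : T.map (fun x => -x) = U := by
    refine hmin _ hT' (by rwa [Ne, Multiset.map_eq_zero]) ?_
    rw [aux_sum_map_neg, hTs, neg_zero]
  have : (T.map (fun x => -x)).map (fun x => -x) = U.map (fun x => -x) := by rw [h1]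
  simpa [Multiset.map_map, Function.comp] using this

lemma aux_zero_not_mem {U : Multiset G} (hU : IsMinZeroSum U) (hc : 2 ≤ U.card) :
    (0 : G) ∉ U := by
  intro h
  have h1 : ({0} : Multiset G) ≤ U := by simpa using h
  have := hU.2.2 {0} h1 (by simp) (by simp)
  have : Multiset.card ({0} : Multiset G) = U.card := by rw [this]
  simp at this; omega

lemma aux_pair_min {g : G} (hg : g ≠ 0) : IsMinZeroSum ({g, -g} : Multiset G) := by
  refine ⟨by simp, by simp, ?_⟩
  intro T hT hT0 hTs
  have hcard : T.card ≤ 2 := by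
    have := Multiset.card_le_card hT
    simpa using this
  interval_cases h : T.card
  · exact absurd (Multiset.card_eq_zero.mp h) hT0
  · obtain ⟨x, rfl⟩ := Multiset.card_eq_one.mp h
    have hx : x ∈ ({g, -g} : Multiset G) := by
      have := Multiset.subset_of_le hT
      exact this (by simp)
    simp at hx hTs
    rcases hx with rfl | rfl
    · exact absurd hTs hg
    · exact absurd (neg_eq_zero.mp hTs) hg
  · exact Multiset.eq_of_le_of_card_le hT (by simp [h])

lemma aux_fact_of_min {V : Multiset G} (hV : IsMinZeroSum V) {w : Multiset (Multiset G)}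
    (hw : IsFactorization V w) : w = {V} := by
  obtain ⟨hatoms, hsum⟩ := hw
  have hw0 : w ≠ 0 := by
    rintro rfl
    exact hV.1 (by simpa using hsum.symm)
  obtain ⟨W, hWmem⟩ := Multiset.exists_mem_of_ne_zero hw0
  obtain ⟨w', rfl⟩ := Multiset.exists_cons_of_mem hWmem
  have hWatom := hatoms W (by simp)
  have hWle : W ≤ V := by
    rw [← hsum]; exact aux_mem_le_sum (by simp)
  have hWV : W = V := hV.2.2 W hWle hWatom.1 hWatom.2.1
  subst hWV
  have hsum' : W + w'.sum = W + 0 := by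
    rw [add_zero]; simpa [Multiset.sum_cons] using hsum
  have hw's : w'.sum = 0 := by
    exact add_left_cancel hsum'
  have : w' = 0 := by
    by_contra h
    obtain ⟨X, hX⟩ := Multiset.exists_mem_of_ne_zero h
    have hXle : X ≤ w'.sum := aux_mem_le_sum hX
    rw [hw's] at hXle
    exact (hatoms X (by simp [hX])).1 (Multiset.le_zero.mp hXle)
  rw [this]; rfl

lemma aux_shrink {S : Multiset G} (hS : IsMinZeroSum S) (hc : 2 ≤ S.card) :
    ∃ S' : Multiset G, IsMinZeroSum S' ∧ S'.card = S.card - 1 := by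
  classical
  obtain ⟨a, ha⟩ := Multiset.exists_mem_of_ne_zero hS.1
  obtain ⟨S1, rfl⟩ := Multiset.exists_cons_of_mem ha
  have hS1 : S1 ≠ 0 := by
    intro h; rw [h] at hc; simp at hc
  obtain ⟨b, hb⟩ := Multiset.exists_mem_of_ne_zero hS1
  obtain ⟨T, rfl⟩ := Multiset.exists_cons_of_mem hb
  refine ⟨(a + b) ::ₘ T, ⟨by simp, ?_, ?_⟩, by simp⟩
  · have := hS.2.1
    simp only [Multiset.sum_cons] at this ⊢
    rw [add_assoc]; exact this
  · intro T' hT' hT'0 hT's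
    by_cases hab : (a + b) ∈ T'
    · obtain ⟨R, rfl⟩ := Multiset.exists_cons_of_mem hab
      have hR : R ≤ T := by
        have := Multiset.erase_le_erase (a := a + b) hT'
          |>.trans_eq (by rw [Multiset.erase_cons_head])
        simpa [Multiset.erase_cons_head] using
          (Multiset.erase_le_erase (a + b) hT').trans_eq (Multiset.erase_cons_head _ _)
      have hT'' : (a ::ₘ b ::ₘ R) = a ::ₘ b ::ₘ T := by
        refine hS.2.2 _ ?_ (by simp) ?_
        · exact Multiset.cons_le_cons a (Multiset.cons_le_cons b hR)
        · simp only [Multiset.sum_cons] at hT's ⊢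
          rw [← add_assoc]; exact hT's
      have hRT : R = T := by
        have h1 := (Multiset.cons_inj_right a).mp hT''
        exact (Multiset.cons_inj_right b).mp h1
      rw [hRT]
    · exfalso
      have hT'T : T' ≤ T := by
        rw [Multiset.le_iff_count]
        intro x
        by_cases hx : x = a + b
        · subst hx
          simp [Multiset.count_eq_zero_of_notMem hab]
        · have := Multiset.count_le_of_le x hT'
          rwa [Multiset.count_cons_of_ne hx] at this
      have : T' = a ::ₘ b ::ₘ T := by
        refine hS.2.2 _ (hT'T.trans ?_) hT'0 hT's
        calc T ≤ b ::ₘ T := (Multiset.le_cons_self _ _)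
        _ ≤ a ::ₘ b ::ₘ T := Multiset.le_cons_self _ _
      have hcard := Multiset.card_le_card hT'T
      rw [this] at hcard
      simp at hcard

lemma aux_exists_min_card (m : ℕ) (hm : 1 ≤ m) (hmD : m ≤ davenport G) :
    ∃ U : Multiset G, IsMinZeroSum U ∧ U.card = m := by
  set s : Set ℕ := {n : ℕ | ∃ A : Multiset G, IsMinZeroSum A ∧ A.card = n} with hs
  have hD : davenport G ∈ s := by
    rcases Set.eq_empty_or_nonempty s with h | h
    · exfalso
      have : davenport G = 0 := by
        rw [davenport, ← hs, h]; simp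
      omega
    · rcases (em (BddAbove s)) with hb | hb
      · exact Nat.sSup_mem h hb
      · exfalso
        have : davenport G = 0 := by
          rw [davenport, ← hs]
          rw [csSup_of_not_bddAbove hb, csSup_empty]
          rfl
        omega
  obtain ⟨W, hW, hWc⟩ := hD
  -- downward induction from davenport G to m
  have key : ∀ k : ℕ, ∀ W : Multiset G, IsMinZeroSum W → W.card = m + k →
      ∃ U : Multiset G, IsMinZeroSum U ∧ U.card = m := by
    intro k
    induction k with
    | zero => intro W hW hWc; exact ⟨W, hW, by omega⟩
    | succ n ih =>
      intro W hW hWc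
      obtain ⟨W', hW', hW'c⟩ := aux_shrink hW (by omega)
      exact ih W' hW' (by omega)
  exact key (davenport G - m) W hW (by omega)

lemma aux_card_sum {α : Type*} (z : Multiset (Multiset α)) :
    Multiset.card z.sum = (z.map Multiset.card).sum := by
  induction z using Multiset.induction_on with
  | empty => simp
  | cons a s ih => simp [Multiset.sum_cons, ih]

lemma aux_pairs_sum (U : Multiset G) :
    (U.map (fun g => ({g, -g} : Multiset G))).sum = U + U.map (fun x => -x) := by
  induction U using Multiset.induction_on with
  | empty => simp
  | cons a s ih =>
    simp only [Multiset.map_cons, Multiset.sum_cons, ih]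
    have : ({a, -a} : Multiset G) = {a} + {-a} := rfl
    rw [this]
    have h1 : a ::ₘ s = {a} + s := (Multiset.singleton_add a s).symm
    have h2 : (-a) ::ₘ s.map (fun x => -x) = {-a} + s.map (fun x => -x) :=
      (Multiset.singleton_add _ _).symm
    rw [h1, h2]
    abel_nf

end aux

section main
variable {G : Type*} [AddCommGroup G]

lemma aux_main (m : ℕ) (hm3 : 3 ≤ m) (U : Multiset G) (hU : IsMinZeroSum U)
    (hUc : U.card = m) :
    tameDeg (U + U.map (fun x => -x)) U = m := by
  letI : DecidableEq (Multiset G) := Classical.decEq _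
  set nU : Multiset G := U.map (fun x => -x) with hnU
  set A : Multiset G := U + nU with hA
  have hnUmin : IsMinZeroSum nU := aux_neg_min hU
  have h0U : (0 : G) ∉ U := aux_zero_not_mem hU (by omega)
  have h0nU : (0 : G) ∉ nU := by
    intro h
    obtain ⟨x, hx, hx0⟩ := Multiset.mem_map.mp h
    have hx' : x = 0 := by rwa [neg_eq_zero] at hx0
    exact h0U (hx' ▸ hx)
  have h0A : (0 : G) ∉ A := by
    intro h
    rcases Multiset.mem_add.mp h with h | h
    exacts [h0U h, h0nU h]
  have hAcard : A.card = 2 * m := by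
    rw [hA, Multiset.card_add, hnU, Multiset.card_map, hUc]; omega
  -- the canonical factorization
  set zU : Multiset (Multiset G) := {U, nU} with hzU
  have hzUfact : IsFactorization A zU := by
    constructor
    · intro W hW
      rw [hzU] at hW
      rcases Multiset.mem_cons.mp hW with rfl | hW
      · exact hU
      · rw [Multiset.mem_singleton.mp hW]; exact hnUmin
    · rw [hzU]; simp [hA]
  have hUzU : U ∈ zU := by rw [hzU]; simp
  -- uniqueness of the factorization containing U
  have huniq : ∀ z : Multiset (Multiset G), IsFactorization A z → U ∈ z → z = zU := by
    intro z hz hUz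
    obtain ⟨w, rfl⟩ := Multiset.exists_cons_of_mem hUz
    have hsum : U + w.sum = U + nU := by
      simpa [Multiset.sum_cons, hA] using hz.2
    have hwsum : w.sum = nU := add_left_cancel hsum
    have hwfact : IsFactorization nU w :=
      ⟨fun W hW => hz.1 W (by simp [hW]), hwsum⟩
    have := aux_fact_of_min hnUmin hwfact
    rw [this, hzU]; rfl
  -- every atom in a factorization has card ≥ 2, so card z ≤ m
  have hcardz : ∀ z : Multiset (Multiset G), IsFactorization A z →
      Multiset.card z ≤ m := by
    intro z hz
    have hge2 : ∀ W ∈ z, 2 ≤ Multiset.card W := by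
      intro W hW
      have hWatom := hz.1 W hW
      have hWle : W ≤ A := by rw [← hz.2]; exact aux_mem_le_sum hW
      by_contra h
      push_neg at h
      interval_cases hWc : Multiset.card W
      · exact hWatom.1 (Multiset.card_eq_zero.mp hWc)
      · obtain ⟨x, rfl⟩ := Multiset.card_eq_one.mp hWc
        have : x = 0 := by simpa using hWatom.2.1
        subst this
        exact h0A (Multiset.subset_of_le hWle (by simp))
    have hsum : (z.map Multiset.card).sum = 2 * m := by
      rw [← aux_card_sum z, hz.2, hAcard]
    have h2 : Multiset.card z * 2 ≤ (z.map Multiset.card).sum := by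
      have := Multiset.card_nsmul_le_sum (s := z.map Multiset.card) (a := 2)
        (fun x hx => by obtain ⟨W, hW, rfl⟩ := Multiset.mem_map.mp hx; exact hge2 W hW)
      simpa [smul_eq_mul] using this
    omega
  -- the pairs factorization
  set zP : Multiset (Multiset G) := U.map (fun g => ({g, -g} : Multiset G)) with hzP
  have hzPfact : IsFactorization A zP := by
    constructor
    · intro W hW
      rw [hzP] at hW
      obtain ⟨g, hg, rfl⟩ := Multiset.mem_map.mp hW
      exact aux_pair_min (fun h => h0U (h ▸ hg))
    · rw [hzP, aux_pairs_sum, hA, hnU]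
  have hzPcard : Multiset.card zP = m := by rw [hzP, Multiset.card_map, hUc]
  -- every element of zP has card 2; elements of zU have card m
  have hzPsub : zP - zU = zP := by
    ext x
    rw [Multiset.count_sub]
    rcases Nat.eq_zero_or_pos (Multiset.count x zU) with h | h
    · omega
    · have hx : x ∈ zU := Multiset.count_pos.mp h
      have hxm : Multiset.card x = m := by
        rw [hzU] at hx
        rcases Multiset.mem_cons.mp hx with rfl | hx
        · exact hUc
        · rw [Multiset.mem_singleton.mp hx, hnU, Multiset.card_map, hUc]
      have : x ∉ zP := by
        intro hxP
        rw [hzP] at hxP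
        obtain ⟨g, hg, rfl⟩ := Multiset.mem_map.mp hxP
        have : Multiset.card ({g, -g} : Multiset G) = 2 := by rfl
        omega
      rw [Multiset.count_eq_zero_of_notMem this]
      omega
  have hdistlow : m ≤ factDist zP zU := by
    rw [factDist]
    have : (zP - zU).card = m := by rw [hzPsub, hzPcard]
    calc m = (zP - zU).card := this.symm
    _ ≤ _ := le_max_left _ _
  -- distance upper bound
  have hdisthigh : ∀ z : Multiset (Multiset G), IsFactorization A z →
      factDist z zU ≤ m := by
    intro z hz
    rw [factDist]
    apply max_le
    · calc (z - zU).card ≤ z.card := Multiset.card_le_card (Multiset.sub_le_self _ _)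
      _ ≤ m := hcardz z hz
    · calc (zU - z).card ≤ zU.card := Multiset.card_le_card (Multiset.sub_le_self _ _)
      _ = 2 := by rw [hzU]; rfl
      _ ≤ m := by omega
  -- characterize the defining set
  set Sset : Set ℕ := {N : ℕ | ∀ z, IsFactorization A z →
    (∃ z', IsFactorization A z' ∧ U ∈ z') →
    ∃ z', IsFactorization A z' ∧ U ∈ z' ∧ factDist z z' ≤ N} with hSset
  have hmem : ∀ N : ℕ, N ∈ Sset ↔ ∀ z, IsFactorization A z → factDist z zU ≤ N := by
    intro N
    constructor
    · intro hN z hz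
      obtain ⟨z', hz', hUz', hd⟩ := hN z hz ⟨zU, hzUfact, hUzU⟩
      rwa [huniq z' hz' hUz'] at hd
    · intro h z hz _
      exact ⟨zU, hzUfact, hUzU, h z hz⟩
  have hmSset : m ∈ Sset := (hmem m).mpr hdisthigh
  have : tameDeg A U = sInf Sset := rfl
  rw [this]
  apply le_antisymm
  · exact Nat.sInf_le hmSset
  · by_contra h
    push_neg at h
    have hne : Sset.Nonempty := ⟨m, hmSset⟩
    have hinf := Nat.sInf_mem hne
    have := (hmem (sInf Sset)).mp hinf zP hzPfact
    omega

end main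

theorem stmt9 (G : Type*) [AddCommGroup G] [Finite G] (hG : 3 ≤ Nat.card G)
    (m : ℕ) (hm3 : 3 ≤ m) (hmD : m ≤ davenport G) :
    (∃ U : Multiset G, IsMinZeroSum U ∧ U.card = m ∧
      tameDeg (U + U.map (fun x => -x)) U = m) ∧
    Set.Icc 3 (davenport G) ⊆ TaSet G := by
  constructor
  · obtain ⟨U, hU, hUc⟩ := aux_exists_min_card m (by omega) hmD
    exact ⟨U, hU, hUc, aux_main m hm3 U hU hUc⟩
  · intro n hn
    obtain ⟨hn3, hnD⟩ := hn
    obtain ⟨U, hU, hUc⟩ := aux_exists_min_card n (by omega) hnD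
    refine ⟨by omega, U + U.map (fun x => -x), U, ?_, hU, aux_main n hn3 U hU hUc⟩
    rw [Multiset.sum_add, hU.2.1, aux_sum_map_neg, hU.2.1]
    simp
end

section
/- Let G = C_2 ⊕ C_2 with generators e_1, e_2. The set of tame degrees of the monoid of zero-sum sequences B(G) is Ta(G) = {3}. -/
/-! With `e₃ = e₁ + e₂`, the atoms of `B(C₂ ⊕ C₂)` are `0, e₁², e₂², e₃², e₁e₂e₃`. Suppose
the atom `U` occurs in some factorization of `A` but not in the factorization `z`. Then
`U ≠ 0`, since `0` lies in an atom of `z` and the only such atom is `0`. Counting how often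
the elements of `U` occur in `A` shows that `z` contains `(e₁e₂e₃)²` if `U` is a square, and
`e₁²e₂²e₃²` if `U = e₁e₂e₃`; exchanging one for the other reaches a factorization containing
`U` at distance `3`. Conversely, a product of two atoms has only one factorization into two
atoms, so two factorizations of `A` that differ in at most two atoms on each side coincide;
hence every factorization containing `U` is at distance at least `3` from `z`. So
`t(A, U) ∈ {0, 3}`, and `t(e₁²e₂²e₃², e₁e₂e₃) = 3`. -/

section ZeroSumSequences

variable {G : Type*} [AddCommGroup G]

theorem isMinZeroSum_iff_powerset (S : Multiset G) :
    IsMinZeroSum S ↔ S ≠ 0 ∧ S.sum = 0 ∧ ∀ T ∈ S.powerset, T ≠ 0 → T.sum = 0 → T = S := by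
  simp only [IsMinZeroSum, Multiset.mem_powerset]

instance [DecidableEq G] : DecidablePred (IsMinZeroSum (G := G)) :=
  fun S => decidable_of_iff' _ (isMinZeroSum_iff_powerset S)

theorem IsMinZeroSum.eq_of_le {U V : Multiset G} (hU : IsMinZeroSum U) (hV : IsMinZeroSum V)
    (h : U ≤ V) : U = V :=
  hV.2.2 U h hU.1 hU.2.1

theorem IsMinZeroSum.eq_singleton_zero {V : Multiset G} (hV : IsMinZeroSum V) (h : (0 : G) ∈ V) :
    V = {0} :=
  (hV.2.2 {0} (Multiset.singleton_le.2 h) (by simp) (by simp)).symm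

theorem factDist_eq [DecidableEq G] (z z' : Multiset (Multiset G)) :
    factDist z z' = max (z - z').card (z' - z).card := by
  unfold factDist
  congr!

theorem factDist_self (z : Multiset (Multiset G)) : factDist z z = 0 := by
  classical
  simp [factDist_eq]

theorem factDist_sub_add_le [DecidableEq G] {z X : Multiset (Multiset G)} (hX : X ≤ z)
    (Y : Multiset (Multiset G)) : factDist z (z - X + Y) ≤ max X.card Y.card := by
  obtain ⟨t, rfl⟩ : ∃ t, z = t + X := ⟨z - X, (tsub_add_cancel_of_le hX).symm⟩
  rw [add_tsub_cancel_right, factDist_eq, add_tsub_add_eq_tsub_left, add_tsub_add_eq_tsub_left]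
  exact max_le_max (Multiset.card_le_card tsub_le_self) (Multiset.card_le_card tsub_le_self)

namespace IsFactorization

variable {A : Multiset G} {z z' : Multiset (Multiset G)}

theorem eq_zero (hz : IsFactorization 0 z) : z = 0 :=
  Multiset.eq_zero_of_forall_notMem fun V hV => (hz.1 V hV).1 (Multiset.sum_eq_zero_iff.1 hz.2 V hV)

theorem eq_singleton (hz : IsFactorization A z) (hA : IsMinZeroSum A) : z = {A} := by
  obtain ⟨V, hV⟩ := Multiset.exists_mem_of_ne_zero (s := z) fun hz0 => hA.1 (by simp [← hz.2, hz0])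
  obtain ⟨z₀, rfl⟩ := Multiset.exists_cons_of_mem hV
  have h : V + z₀.sum = A := by rw [← Multiset.sum_cons, hz.2]
  obtain rfl : V = A := (hz.1 V hV).eq_of_le hA (h ▸ le_self_add)
  have hz₀ : z₀ = 0 := eq_zero ⟨fun U hU => hz.1 U (Multiset.mem_cons_of_mem hU), add_eq_left.1 h⟩
  simp [hz₀]

theorem eq_of_card_le_one (hz : IsFactorization A z) (hz' : IsFactorization A z')
    (hc : z.card ≤ 1) : z = z' := by
  rcases Nat.le_one_iff_eq_zero_or_eq_one.1 hc with hc | hc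
  · obtain rfl := Multiset.card_eq_zero.1 hc
    obtain rfl : A = 0 := by rw [← hz.2, Multiset.sum_zero]
    exact hz'.eq_zero.symm
  · obtain ⟨V, rfl⟩ := Multiset.card_eq_one.1 hc
    obtain rfl : A = V := by rw [← hz.2, Multiset.sum_singleton]
    exact (hz'.eq_singleton (hz.1 _ (Multiset.mem_singleton_self _))).symm

theorem sub_add [DecidableEq G] (hz : IsFactorization A z) {X Y : Multiset (Multiset G)}
    (hX : X ≤ z) (hY : ∀ V ∈ Y, IsMinZeroSum V) (h : Y.sum = X.sum) :
    IsFactorization A (z - X + Y) := by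
  refine ⟨fun V hV => ?_, ?_⟩
  · rcases Multiset.mem_add.1 hV with hV | hV
    exacts [hz.1 V (Multiset.mem_of_le tsub_le_self hV), hY V hV]
  · rw [Multiset.sum_add, h, ← Multiset.sum_add, tsub_add_cancel_of_le hX, hz.2]

theorem sum_sub_comm [DecidableEq G] (hz : IsFactorization A z) (hz' : IsFactorization A z') :
    (z - z').sum = (z' - z).sum := by
  have h : (z - z' + z ∩ z').sum = (z' - z + z' ∩ z).sum := by
    rw [Multiset.sub_add_inter, Multiset.sub_add_inter, hz.2, hz'.2]
  rw [Multiset.sum_add, Multiset.sum_add, Multiset.inter_comm z'] at h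
  exact add_right_cancel h

theorem singleton_zero_mem (hz : IsFactorization A z) (h : (0 : G) ∈ A) : {0} ∈ z := by
  rw [← hz.2] at h
  obtain ⟨V, hVz, h0V⟩ := Multiset.mem_join.1 h
  rwa [← (hz.1 V hVz).eq_singleton_zero h0V]

end IsFactorization

def PairsFactorUniquely (G : Type*) [AddCommGroup G] : Prop :=
  ∀ U V W Y : Multiset G, IsMinZeroSum U → IsMinZeroSum V → IsMinZeroSum W → IsMinZeroSum Y →
    U + V = W + Y → ({U, V} : Multiset (Multiset G)) = {W, Y}

namespace PairsFactorUniquely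

variable {A : Multiset G} {z z' : Multiset (Multiset G)}

theorem eq_of_card_le_two (hG : PairsFactorUniquely G) (hz : IsFactorization A z)
    (hz' : IsFactorization A z') (hc : z.card ≤ 2) (hc' : z'.card ≤ 2) : z = z' := by
  by_cases hc1 : z.card ≤ 1
  · exact hz.eq_of_card_le_one hz' hc1
  by_cases hc1' : z'.card ≤ 1
  · exact (hz'.eq_of_card_le_one hz hc1').symm
  obtain ⟨U, V, rfl⟩ := Multiset.card_eq_two.1 (by omega : z.card = 2)
  obtain ⟨W, Y, rfl⟩ := Multiset.card_eq_two.1 (by omega : z'.card = 2)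
  obtain ⟨hz, hzA⟩ := hz
  obtain ⟨hz', hz'A⟩ := hz'
  simp only [Multiset.insert_eq_cons, Multiset.mem_cons, Multiset.mem_singleton,
    forall_eq_or_imp, forall_eq, Multiset.sum_cons, Multiset.sum_singleton] at hz hz' hzA hz'A
  exact hG U V W Y hz.1 hz.2 hz'.1 hz'.2 (hzA.trans hz'A.symm)

theorem three_le_factDist (hG : PairsFactorUniquely G) {U : Multiset G}
    (hz : IsFactorization A z) (hz' : IsFactorization A z') (hUz : U ∉ z) (hUz' : U ∈ z') :
    3 ≤ factDist z z' := by
  classical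
  rw [factDist_eq]
  by_contra! hlt
  have hdiff : z - z' = z' - z :=
    hG.eq_of_card_le_two ⟨fun V hV => hz.1 V (Multiset.mem_of_le tsub_le_self hV), rfl⟩
      ⟨fun V hV => hz'.1 V (Multiset.mem_of_le tsub_le_self hV), (hz.sum_sub_comm hz').symm⟩
      (by omega) (by omega)
  have hU : U ∈ z' - z := by
    rw [← Multiset.count_pos, Multiset.count_sub, Multiset.count_eq_zero_of_notMem hUz]
    exact Multiset.count_pos.2 hUz'
  exact hUz (Multiset.mem_of_le tsub_le_self (hdiff ▸ hU))

end PairsFactorUniquely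

theorem tameDeg_eq {A U : Multiset G} {N : ℕ}
    (hup : ∀ z z', IsFactorization A z → IsFactorization A z' → U ∈ z' →
      ∃ z'', IsFactorization A z'' ∧ U ∈ z'' ∧ factDist z z'' ≤ N)
    (hlow : ∀ z z', IsFactorization A z → IsFactorization A z' → U ∉ z → U ∈ z' →
      N ≤ factDist z z')
    {z z' : Multiset (Multiset G)} (hz : IsFactorization A z) (hz' : IsFactorization A z')
    (hUz : U ∉ z) (hUz' : U ∈ z') : tameDeg A U = N := by
  have hN : N ∈ {N : ℕ | ∀ z, IsFactorization A z → (∃ z', IsFactorization A z' ∧ U ∈ z') →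
      ∃ z', IsFactorization A z' ∧ U ∈ z' ∧ factDist z z' ≤ N} :=
    fun z hz ⟨z', hz', hUz'⟩ => hup z z' hz hz' hUz'
  obtain ⟨z'', hz'', hUz'', hdist⟩ := Nat.sInf_mem ⟨N, hN⟩ z hz ⟨z', hz', hUz'⟩
  exact le_antisymm (Nat.sInf_le hN) ((hlow z z'' hz hz'' hUz hUz'').trans hdist)

theorem tameDeg_eq_zero_or_eq {A U : Multiset G} {N : ℕ}
    (hup : ∀ z z', IsFactorization A z → IsFactorization A z' → U ∈ z' →
      ∃ z'', IsFactorization A z'' ∧ U ∈ z'' ∧ factDist z z'' ≤ N)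
    (hlow : ∀ z z', IsFactorization A z → IsFactorization A z' → U ∉ z → U ∈ z' →
      N ≤ factDist z z') :
    tameDeg A U = 0 ∨ tameDeg A U = N := by
  by_cases h : ∃ z z', IsFactorization A z ∧ IsFactorization A z' ∧ U ∉ z ∧ U ∈ z'
  · obtain ⟨z, z', hz, hz', hUz, hUz'⟩ := h
    exact Or.inr (tameDeg_eq hup hlow hz hz' hUz hUz')
  · refine Or.inl (Nat.eq_zero_of_le_zero (Nat.sInf_le ?_))
    rintro z hz ⟨z', hz', hUz'⟩
    exact ⟨z, hz, not_not.1 fun hUz => h ⟨z, z', hz, hz', hUz, hUz'⟩, by rw [factDist_self]⟩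

end ZeroSumSequences

namespace KleinFour

abbrev e₁ : ZMod 2 × ZMod 2 := (1, 0)
abbrev e₂ : ZMod 2 × ZMod 2 := (0, 1)
abbrev e₃ : ZMod 2 × ZMod 2 := e₁ + e₂

abbrev triple : Multiset (ZMod 2 × ZMod 2) := {e₁, e₂, e₃}

abbrev squares : Multiset (Multiset (ZMod 2 × ZMod 2)) := {{e₁, e₁}, {e₂, e₂}, {e₃, e₃}}

def atoms : Finset (Multiset (ZMod 2 × ZMod 2)) :=
  {{0}, {e₁, e₁}, {e₂, e₂}, {e₃, e₃}, triple}

theorem isMinZeroSum_iff_mem_atoms (S : Multiset (ZMod 2 × ZMod 2)) :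
    IsMinZeroSum S ↔ S ∈ atoms := by
  have hatoms : ∀ S ∈ atoms, IsMinZeroSum S := by decide
  refine ⟨fun hS => ?_, hatoms S⟩
  by_cases hnd : S.Nodup
  · have hmem : S ∈ (Finset.univ : Finset (ZMod 2 × ZMod 2)).val.powerset :=
      Multiset.mem_powerset.2 ((Multiset.le_iff_subset hnd).2 fun x _ => Finset.mem_univ x)
    have hsub : ∀ T ∈ (Finset.univ : Finset (ZMod 2 × ZMod 2)).val.powerset,
        IsMinZeroSum T → T ∈ atoms := by decide
    exact hsub S hmem hS
  · obtain ⟨x, hx⟩ : ∃ x, 1 < S.count x := by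
      simpa [Multiset.nodup_iff_count_le_one] using hnd
    have hxx : ({x, x} : Multiset _) = S :=
      hS.2.2 _ (Multiset.le_count_iff_replicate_le.1 hx) (by simp)
        ((by decide : ∀ y : ZMod 2 × ZMod 2, y + y = 0) x ▸ by simp)
    have hsq : ∀ y : ZMod 2 × ZMod 2, IsMinZeroSum ({y, y} : Multiset _) → {y, y} ∈ atoms := by
      decide
    exact hxx ▸ hsq x (hxx ▸ hS)

theorem pairsFactorUniquely : PairsFactorUniquely (ZMod 2 × ZMod 2) := by
  have key : ∀ U ∈ atoms, ∀ V ∈ atoms, ∀ W ∈ atoms, ∀ Y ∈ atoms,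
      U + V = W + Y → ({U, V} : Multiset (Multiset (ZMod 2 × ZMod 2))) = {W, Y} := by
    decide
  intro U V W Y hU hV hW hY
  simp only [isMinZeroSum_iff_mem_atoms] at hU hV hW hY
  exact key U hU V hV W hW Y hY

theorem count_eq_count_triple {A : Multiset (ZMod 2 × ZMod 2)}
    {z : Multiset (Multiset (ZMod 2 × ZMod 2))} (hz : IsFactorization A z)
    {x : ZMod 2 × ZMod 2} (hx : x ≠ 0) (hxx : {x, x} ∉ z) : A.count x = z.count triple := by
  have key : ∀ x : ZMod 2 × ZMod 2, x ≠ 0 → ∀ V ∈ atoms, V ≠ {x, x} →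
      V.count x = ({V} : Multiset _).count triple := by
    decide
  calc A.count x = (z.map (Multiset.count x)).sum := by
        rw [← hz.2, ← Multiset.coe_countAddMonoidHom, map_multiset_sum]
    _ = ((z.map singleton).map (Multiset.count triple)).sum := by
        rw [Multiset.map_map]
        exact congrArg _ (Multiset.map_congr rfl fun V hV =>
          key x hx V ((isMinZeroSum_iff_mem_atoms V).1 (hz.1 V hV)) (ne_of_mem_of_not_mem hV hxx))
    _ = z.count triple := by
        rw [← Multiset.coe_countAddMonoidHom, ← map_multiset_sum, Multiset.sum_map_singleton]

variable {A : Multiset (ZMod 2 × ZMod 2)} {z : Multiset (Multiset (ZMod 2 × ZMod 2))}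

theorem exists_mem_factDist_le_three_of_square (hz : IsFactorization A z)
    {x : ZMod 2 × ZMod 2} (hx : x ≠ 0) (hxA : 2 ≤ A.count x) (hxx : {x, x} ∉ z) :
    ∃ z', IsFactorization A z' ∧ {x, x} ∈ z' ∧ factDist z z' ≤ 3 := by
  have hle : {triple, triple} ≤ z :=
    Multiset.le_count_iff_replicate_le.1 (count_eq_count_triple hz hx hxx ▸ hxA)
  have hsq : ∀ y : ZMod 2 × ZMod 2, y ≠ 0 → {y, y} ∈ squares := by decide
  exact ⟨z - {triple, triple} + squares, hz.sub_add hle (by decide) (by decide),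
    Multiset.mem_add.2 (Or.inr (hsq x hx)), (factDist_sub_add_le hle _).trans (by decide)⟩

theorem exists_mem_factDist_le_three_of_triple (hz : IsFactorization A z)
    (hA : triple ≤ A) (hz₃ : triple ∉ z) :
    ∃ z', IsFactorization A z' ∧ triple ∈ z' ∧ factDist z z' ≤ 3 := by
  have hle : squares ≤ z := by
    refine (Multiset.le_iff_subset (by decide)).2 fun V hV => ?_
    obtain ⟨x, hx, rfl⟩ : ∃ x ∈ triple, V = {x, x} := by revert V; decide
    by_contra hxx
    have hcount := count_eq_count_triple hz (ne_of_mem_of_not_mem hx (by decide)) hxx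
    rw [Multiset.count_eq_zero_of_notMem hz₃] at hcount
    exact Multiset.count_ne_zero.2 (Multiset.mem_of_le hA hx) hcount
  exact ⟨z - squares + {triple, triple}, hz.sub_add hle (by decide) (by decide), by simp,
    (factDist_sub_add_le hle _).trans (by decide)⟩

theorem exists_mem_factDist_le_three {z' : Multiset (Multiset (ZMod 2 × ZMod 2))}
    {U : Multiset (ZMod 2 × ZMod 2)} (hz : IsFactorization A z) (hz' : IsFactorization A z')
    (hUz' : U ∈ z') : ∃ z'', IsFactorization A z'' ∧ U ∈ z'' ∧ factDist z z'' ≤ 3 := by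
  by_cases hUz : U ∈ z
  · exact ⟨z, hz, hUz, by rw [factDist_self]; omega⟩
  have hUA : U ≤ A := hz'.2 ▸ Multiset.le_sum_of_mem hUz'
  have hU : U ∈ atoms := (isMinZeroSum_iff_mem_atoms U).1 (hz'.1 U hUz')
  simp only [atoms, Finset.mem_insert, Finset.mem_singleton] at hU
  rcases hU with rfl | rfl | rfl | rfl | rfl
  · exact absurd (hz.singleton_zero_mem (Multiset.singleton_le.1 hUA)) hUz
  · exact exists_mem_factDist_le_three_of_square hz (by decide)
      (Multiset.le_count_iff_replicate_le.2 hUA) hUz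
  · exact exists_mem_factDist_le_three_of_square hz (by decide)
      (Multiset.le_count_iff_replicate_le.2 hUA) hUz
  · exact exists_mem_factDist_le_three_of_square hz (by decide)
      (Multiset.le_count_iff_replicate_le.2 hUA) hUz
  · exact exists_mem_factDist_le_three_of_triple hz hUA hUz

theorem tameDeg_eq_zero_or_three (A U : Multiset (ZMod 2 × ZMod 2)) :
    tameDeg A U = 0 ∨ tameDeg A U = 3 :=
  tameDeg_eq_zero_or_eq (fun _ _ => exists_mem_factDist_le_three)
    (fun _ _ hz => pairsFactorUniquely.three_le_factDist hz)

theorem tameDeg_sum_squares_triple : tameDeg squares.sum triple = 3 :=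
  tameDeg_eq (fun _ _ => exists_mem_factDist_le_three)
    (fun _ _ hz => pairsFactorUniquely.three_le_factDist hz)
    (z := squares) (z' := {triple, triple}) ⟨by decide, rfl⟩ ⟨by decide, by decide⟩
    (by decide) (by simp)

end KleinFour

theorem stmt10 : TaSet (ZMod 2 × ZMod 2) = {3} := by
  ext n
  constructor
  · rintro ⟨hn, A, U, -, -, rfl⟩
    exact (KleinFour.tameDeg_eq_zero_or_three A U).resolve_left hn.ne'
  · rintro rfl
    exact ⟨three_pos, _, _, by decide, by decide, KleinFour.tameDeg_sum_squares_triple⟩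
end

section
/- Let H = H_1 × ... × H_n be a finite product of reduced commutative BF-monoids. Then the set of tame degrees satisfies Ta(H) = Ta(H_1) ∪ ... ∪ Ta(H_n). -/
/-- The set of factorization lengths of `a` in a commutative cancellative monoid. -/
def lengthSet {M : Type*} [CancelCommMonoid M] (a : M) : Set ℕ :=
  {n | ∃ l : Multiset M, (∀ u ∈ l, Irreducible u) ∧ l.prod = a ∧ l.card = n}

/-- A factorization of `a` into irreducible elements (for reduced monoids). -/
def IsMFactorization {M : Type*} [CancelCommMonoid M] (a : M) (z : Multiset M) : Prop :=
  (∀ u ∈ z, Irreducible u) ∧ z.prod = a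

/-- The usual distance between two factorizations. -/
noncomputable def mfactDist {M : Type*} [CancelCommMonoid M] (z z' : Multiset M) : ℕ :=
  letI := Classical.decEq M
  max (z - z').card (z' - z).card

/-- The tame degree `t(a, u)`. -/
noncomputable def mtameDeg {M : Type*} [CancelCommMonoid M] (a u : M) : ℕ :=
  sInf {N : ℕ | ∀ z, IsMFactorization a z →
    (∃ z', IsMFactorization a z' ∧ u ∈ z') →
    ∃ z', IsMFactorization a z' ∧ u ∈ z' ∧ mfactDist z z' ≤ N}

/-- The set of positive tame degrees `Ta(M)`. -/
noncomputable def mTaSet (M : Type*) [CancelCommMonoid M] : Set ℕ :=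
  {n | 0 < n ∧ ∃ a u : M, Irreducible u ∧ mtameDeg a u = n}

/-!
In a reduced product the atoms are the elements `Pi.mulSingle i u` with `u` an atom of `H i`,
so a factorization `Z` of `A` is the union of its `i`-th part, a factorization of `A i` placed
in coordinate `i`, and a remainder that is trivial in coordinate `i`. To reach a factorization
containing `Pi.mulSingle i u` it suffices to replace the `i`-th part and keep the remainder, and
passing to `i`-th parts does not increase distances; hence `t(A, Pi.mulSingle i u) = t(A i, u)`.
A positive tame degree `t(a, u)` forces `a` to have a factorization, as otherwise the condition
defining it already holds for `N = 0`; so the elements met in both inclusions are factorizable.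
-/

section Distance

variable {M N : Type*} [CancelCommMonoid M] [CancelCommMonoid N]

theorem mfactDist_eq [DecidableEq M] (z z' : Multiset M) :
    mfactDist z z' = max (z - z').card (z' - z).card := by
  unfold mfactDist
  congr!

theorem Multiset.map_sub_le_map_sub {α β : Type*} [DecidableEq α] [DecidableEq β] (f : α → β)
    (s t : Multiset α) : s.map f - t.map f ≤ (s - t).map f := by
  rw [tsub_le_iff_right, ← Multiset.map_add]
  exact Multiset.map_le_map le_tsub_add

theorem mfactDist_map_le (f : M → N) (z z' : Multiset M) :
    mfactDist (z.map f) (z'.map f) ≤ mfactDist z z' := by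
  classical
  have key (s t : Multiset M) : (s.map f - t.map f).card ≤ (s - t).card :=
    (Multiset.card_le_card (Multiset.map_sub_le_map_sub f s t)).trans_eq (Multiset.card_map _ _)
  rw [mfactDist_eq, mfactDist_eq]
  exact max_le_max (key z z') (key z' z)

theorem mfactDist_filter_le (p : M → Prop) [DecidablePred p] (z z' : Multiset M) :
    mfactDist (z.filter p) (z'.filter p) ≤ mfactDist z z' := by
  classical
  have key (s t : Multiset M) : (s.filter p - t.filter p).card ≤ (s - t).card := by
    rw [← Multiset.filter_sub]
    exact Multiset.card_le_card (Multiset.filter_le _ _)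
  rw [mfactDist_eq, mfactDist_eq]
  exact max_le_max (key z z') (key z' z)

theorem mfactDist_add_right (z z' w : Multiset M) :
    mfactDist (z + w) (z' + w) = mfactDist z z' := by
  classical
  rw [mfactDist_eq, mfactDist_eq, add_tsub_add_eq_tsub_right, add_tsub_add_eq_tsub_right]

end Distance

section TameDegree

variable {M : Type*} [CancelCommMonoid M]

theorem IsMFactorization.add {a b : M} {z w : Multiset M} (hz : IsMFactorization a z)
    (hw : IsMFactorization b w) : IsMFactorization (a * b) (z + w) := by
  refine ⟨fun u hu => ?_, by rw [Multiset.prod_add, hz.2, hw.2]⟩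
  rcases Multiset.mem_add.1 hu with hu | hu
  exacts [hz.1 u hu, hw.1 u hu]

def IsTameBound (a u : M) (N : ℕ) : Prop :=
  ∀ z, IsMFactorization a z → (∃ z', IsMFactorization a z' ∧ u ∈ z') →
    ∃ z', IsMFactorization a z' ∧ u ∈ z' ∧ mfactDist z z' ≤ N

theorem mtameDeg_eq_sInf (a u : M) : mtameDeg a u = sInf {N | IsTameBound a u N} := rfl

theorem exists_isMFactorization_of_mtameDeg_ne_zero {a u : M} (h : mtameDeg a u ≠ 0) :
    ∃ z, IsMFactorization a z := by
  by_contra! hfac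
  exact h (Nat.sInf_eq_zero.2 (Or.inl fun z hz => absurd hz (hfac z)))

end TameDegree

section CoordFactors

variable {ι : Type*} {H : ι → Type*} [∀ i, CancelCommMonoid (H i)] [∀ i, DecidableEq (H i)]

def coordFactors (i : ι) (z : Multiset (∀ j, H j)) : Multiset (H i) :=
  (z.filter (· i ≠ 1)).map (· i)

theorem mfactDist_coordFactors_le (i : ι) (z z' : Multiset (∀ j, H j)) :
    mfactDist (coordFactors i z) (coordFactors i z') ≤ mfactDist z z' :=
  (mfactDist_map_le _ _ _).trans (mfactDist_filter_le _ _ _)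

end CoordFactors

section Pi

variable {ι : Type*} [DecidableEq ι] {H : ι → Type*}

theorem Pi.irreducible_mulSingle_iff [∀ i, CommMonoid (H i)] {i : ι} {a : H i} :
    Irreducible (Pi.mulSingle i a) ↔ Irreducible a := by
  constructor
  · intro h
    refine ⟨fun ha => h.not_isUnit (ha.map (MonoidHom.mulSingle H i)), fun b c hbc => ?_⟩
    have hsplit : Pi.mulSingle i a = Pi.mulSingle i b * Pi.mulSingle i c := by
      rw [hbc, Pi.mulSingle_mul]
    refine (h.isUnit_or_isUnit hsplit).imp (fun hb => ?_) (fun hc => ?_)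
    · simpa using hb.map (Pi.evalMonoidHom H i)
    · simpa using hc.map (Pi.evalMonoidHom H i)
  · intro h
    refine ⟨fun ha => h.not_isUnit (by simpa using ha.map (Pi.evalMonoidHom H i)),
      fun v w hvw => ?_⟩
    have hunit (j : ι) (hj : j ≠ i) : IsUnit (v j) ∧ IsUnit (w j) := by
      have hj1 : v j * w j = 1 := by simpa [Pi.mulSingle_eq_of_ne hj] using (congrFun hvw j).symm
      exact ⟨.of_mul_eq_one _ hj1, .of_mul_eq_one_right _ hj1⟩
    have hi : a = v i * w i := by simpa using congrFun hvw i
    refine (h.isUnit_or_isUnit hi).imp (fun hv => ?_) (fun hw => ?_) <;>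
      refine Pi.isUnit_iff.2 fun j => ?_ <;> by_cases hj : j = i
    · exact hj ▸ hv
    · exact (hunit j hj).1
    · exact hj ▸ hw
    · exact (hunit j hj).2

variable [∀ i, CancelCommMonoid (H i)]

theorem IsMFactorization.map_mulSingle {i : ι} {a : H i} {z : Multiset (H i)}
    (hz : IsMFactorization a z) :
    IsMFactorization (Pi.mulSingle i a) (z.map (Pi.mulSingle i)) := by
  refine ⟨fun x hx => ?_, ?_⟩
  · obtain ⟨b, hb, rfl⟩ := Multiset.mem_map.1 hx
    exact Pi.irreducible_mulSingle_iff.2 (hz.1 b hb)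
  · rw [← hz.2]
    exact (map_multiset_prod (MonoidHom.mulSingle H i) z).symm

section DecidableEq

variable [∀ i, DecidableEq (H i)]

theorem mem_coordFactors {i : ι} {u : H i} (hu : u ≠ 1) {z : Multiset (∀ j, H j)}
    (h : Pi.mulSingle i u ∈ z) : u ∈ coordFactors i z :=
  Multiset.mem_map.2 ⟨_, Multiset.mem_filter.2 ⟨h, by simpa⟩, Pi.mulSingle_eq_same i u⟩

theorem coordFactors_map_mulSingle_add {i : ι} {w : Multiset (H i)} (hw : ∀ a ∈ w, a ≠ 1)
    (z : Multiset (∀ j, H j)) :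
    coordFactors i (w.map (Pi.mulSingle i) + z.filter (· i = 1)) = w := by
  simpa [coordFactors, Multiset.filter_add, Multiset.filter_map] using hw

end DecidableEq

variable [∀ i, Subsingleton (H i)ˣ]

theorem Pi.exists_eq_mulSingle_of_irreducible {U : ∀ i, H i} (hU : Irreducible U) :
    ∃ i, ∃ a : H i, Irreducible a ∧ U = Pi.mulSingle i a := by
  obtain ⟨i, hi⟩ : ∃ i, U i ≠ 1 := Function.ne_iff.1 hU.ne_one
  have hsplit : U = Pi.mulSingle i (U i) * Function.update U i 1 := by
    funext j
    by_cases hj : j = i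
    · subst hj; simp
    · simp [hj]
  rcases hU.isUnit_or_isUnit hsplit with h | h
  · exact absurd (Pi.mulSingle_eq_one_iff.1 (isUnit_iff_eq_one.1 h)) hi
  · rw [isUnit_iff_eq_one.1 h, mul_one] at hsplit
    refine ⟨i, U i, Pi.irreducible_mulSingle_iff.1 ?_, hsplit⟩
    rwa [← hsplit]

theorem Pi.eq_mulSingle_of_irreducible {U : ∀ j, H j} (hU : Irreducible U) {i : ι}
    (hi : U i ≠ 1) : U = Pi.mulSingle i (U i) := by
  obtain ⟨j, a, -, rfl⟩ := Pi.exists_eq_mulSingle_of_irreducible hU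
  obtain rfl : j = i := by
    by_contra h
    exact hi (Pi.mulSingle_eq_of_ne (Ne.symm h) a)
  simp

variable [∀ i, DecidableEq (H i)]

theorem filter_ne_one_eq_map_mulSingle {z : Multiset (∀ j, H j)} (hz : ∀ x ∈ z, Irreducible x)
    (i : ι) : z.filter (· i ≠ 1) = (coordFactors i z).map (Pi.mulSingle i) := by
  rw [coordFactors, Multiset.map_map]
  refine (Multiset.map_id' _).symm.trans (Multiset.map_congr rfl fun x hx => ?_)
  rw [Multiset.mem_filter] at hx
  exact Pi.eq_mulSingle_of_irreducible (hz x hx.1) hx.2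

variable {A : ∀ j, H j} {z : Multiset (∀ j, H j)}

theorem IsMFactorization.map_mulSingle_add_filter (hz : IsMFactorization A z) (i : ι) :
    (coordFactors i z).map (Pi.mulSingle i) + z.filter (· i = 1) = z := by
  rw [← filter_ne_one_eq_map_mulSingle hz.1]
  simpa using Multiset.filter_add_not (· i ≠ 1) z

theorem IsMFactorization.coordFactors (hz : IsMFactorization A z) (i : ι) :
    IsMFactorization (A i) (coordFactors i z) := by
  refine ⟨fun a ha => ?_, ?_⟩
  · obtain ⟨x, hx, rfl⟩ := Multiset.mem_map.1 ha
    rw [Multiset.mem_filter] at hx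
    have hirr := hz.1 x hx.1
    rw [Pi.eq_mulSingle_of_irreducible hirr hx.2] at hirr
    exact Pi.irreducible_mulSingle_iff.1 hirr
  · conv_rhs => rw [← hz.2, ← hz.map_mulSingle_add_filter i]
    simp only [Pi.multiset_prod_apply, Multiset.map_add, Multiset.map_map, Function.comp_apply,
      Pi.mulSingle_eq_same, Multiset.map_id', Multiset.prod_add, left_eq_mul]
    exact Multiset.prod_eq_one (by simp +contextual)

theorem IsMFactorization.replaceCoord {i : ι} {w : Multiset (H i)} (hz : IsMFactorization A z)
    (hw : IsMFactorization (A i) w) :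
    IsMFactorization A (w.map (Pi.mulSingle i) + z.filter (· i = 1)) := by
  have hR : IsMFactorization (z.filter (· i = 1)).prod (z.filter (· i = 1)) :=
    ⟨fun x hx => hz.1 x (Multiset.mem_of_mem_filter hx), rfl⟩
  convert hw.map_mulSingle.add hR
  conv_lhs => rw [← hz.2, ← hz.map_mulSingle_add_filter i]
  rw [Multiset.prod_add, (hz.coordFactors i).map_mulSingle.2]

variable {i : ι} {u : H i} {N : ℕ}

theorem IsTameBound.of_mulSingle (hu : Irreducible u) (hA : ∃ Z, IsMFactorization A Z)
    (h : IsTameBound A (Pi.mulSingle i u) N) : IsTameBound (A i) u N := by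
  rintro w hw ⟨w₀, hw₀, huw₀⟩
  obtain ⟨Z, hZ⟩ := hA
  obtain ⟨Z', hZ', huZ', hd⟩ := h _ (hZ.replaceCoord hw)
    ⟨_, hZ.replaceCoord hw₀, Multiset.mem_add.2 (Or.inl (Multiset.mem_map_of_mem _ huw₀))⟩
  refine ⟨coordFactors i Z', hZ'.coordFactors i, mem_coordFactors hu.ne_one huZ', ?_⟩
  calc mfactDist w (coordFactors i Z')
      = mfactDist (coordFactors i (w.map (Pi.mulSingle i) + Z.filter (· i = 1)))
          (coordFactors i Z') := by
        rw [coordFactors_map_mulSingle_add fun a ha => (hw.1 a ha).ne_one]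
    _ ≤ mfactDist (w.map (Pi.mulSingle i) + Z.filter (· i = 1)) Z' :=
        mfactDist_coordFactors_le i _ _
    _ ≤ N := hd

theorem IsTameBound.mulSingle (hu : Irreducible u) (h : IsTameBound (A i) u N) :
    IsTameBound A (Pi.mulSingle i u) N := by
  rintro Z hZ ⟨Z₀, hZ₀, huZ₀⟩
  obtain ⟨w, hw, huw, hd⟩ :=
    h _ (hZ.coordFactors i) ⟨_, hZ₀.coordFactors i, mem_coordFactors hu.ne_one huZ₀⟩
  refine ⟨w.map (Pi.mulSingle i) + Z.filter (· i = 1), hZ.replaceCoord hw,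
    Multiset.mem_add.2 (Or.inl (Multiset.mem_map_of_mem _ huw)), ?_⟩
  calc mfactDist Z (w.map (Pi.mulSingle i) + Z.filter (· i = 1))
      = mfactDist ((coordFactors i Z).map (Pi.mulSingle i) + Z.filter (· i = 1))
          (w.map (Pi.mulSingle i) + Z.filter (· i = 1)) := by
        rw [hZ.map_mulSingle_add_filter]
    _ = mfactDist ((coordFactors i Z).map (Pi.mulSingle i)) (w.map (Pi.mulSingle i)) :=
        mfactDist_add_right _ _ _
    _ ≤ mfactDist (coordFactors i Z) w := mfactDist_map_le _ _ _
    _ ≤ N := hd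

theorem mtameDeg_mulSingle (hu : Irreducible u) (hA : ∃ Z, IsMFactorization A Z) :
    mtameDeg A (Pi.mulSingle i u) = mtameDeg (A i) u := by
  rw [mtameDeg_eq_sInf, mtameDeg_eq_sInf]
  congr 1
  ext N
  exact ⟨fun h => h.of_mulSingle hu hA, fun h => h.mulSingle hu⟩

end Pi

theorem stmt17_general (n : ℕ) (H : Fin n → Type*) [∀ i, CancelCommMonoid (H i)]
    (hred : ∀ i (x : H i), IsUnit x → x = 1) :
    mTaSet (∀ i, H i) = ⋃ i, mTaSet (H i) := by
  classical
  have (i : Fin n) : Subsingleton (H i)ˣ :=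
    ⟨fun x y => Units.ext ((hred i _ x.isUnit).trans (hred i _ y.isUnit).symm)⟩
  ext N
  simp only [mTaSet, Set.mem_iUnion, Set.mem_ofPred_eq]
  constructor
  · rintro ⟨hN, A, U, hU, rfl⟩
    obtain ⟨i, u, hu, rfl⟩ := Pi.exists_eq_mulSingle_of_irreducible hU
    have hA := exists_isMFactorization_of_mtameDeg_ne_zero hN.ne'
    exact ⟨i, hN, A i, u, hu, (mtameDeg_mulSingle hu hA).symm⟩
  · rintro ⟨i, hN, a, u, hu, rfl⟩
    obtain ⟨z, hz⟩ := exists_isMFactorization_of_mtameDeg_ne_zero hN.ne'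
    refine ⟨hN, Pi.mulSingle i a, Pi.mulSingle i u, Pi.irreducible_mulSingle_iff.2 hu, ?_⟩
    rw [mtameDeg_mulSingle hu ⟨_, hz.map_mulSingle⟩, Pi.mulSingle_eq_same]

/-- For a finite product of reduced commutative BF-monoids,
`Ta(H₁ × ⋯ × Hₙ) = Ta(H₁) ∪ ⋯ ∪ Ta(Hₙ)`. -/
theorem stmt17 (n : ℕ) (H : Fin n → Type*) [∀ i, CancelCommMonoid (H i)]
    (hred : ∀ i (x : H i), IsUnit x → x = 1)
    (hBF : ∀ i (a : H i), (lengthSet a).Finite ∧ (lengthSet a).Nonempty) :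
    mTaSet (∀ i, H i) = ⋃ i, mTaSet (H i) :=
  stmt17_general n H hred
end
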